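/- arXiv:math/0607218 — 3 statements merged into one kernel-verified Lean document; each statement's English description precedes it below -/
import Mathlib

section
/- If H ⊆ Q*_λ is linked, then (a) for any p₀, …, p_n ∈ H (n < ω) there is q ∈ Q*_λ which is ≤*-above each of p₀, …, p_n, and (b) fil(H) has the finite intersection property. -/
namespace RS889

noncomputable section

open Cardinal Set

universe u v

/-- `F` is a (proper) filter on the set `Z`, presented as the family of its members. -/
def IsFilterOn {α : Type u} (F : Set (Set α)) (Z : Set α) : Prop :=
  (∀ A ∈ F, A ⊆ Z) ∧ Z ∈ F ∧
    (∀ A ∈ F, ∀ B, A ⊆ B → B ⊆ Z → B ∈ F) ∧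
    (∀ A ∈ F, ∀ B ∈ F, A ∩ B ∈ F) ∧ ∅ ∉ F

/-- The family `F⁺` of `F`-positive subsets of `Z`. -/
def posOf {α : Type u} (F : Set (Set α)) (Z : Set α) : Set (Set α) :=
  {B | B ⊆ Z ∧ ∀ C ∈ F, (B ∩ C).Nonempty}

/-- `F` is an ultrafilter on the set `Z`. -/
def IsUltraOn {α : Type u} (F : Set (Set α)) (Z : Set α) : Prop :=
  IsFilterOn F Z ∧ ∀ A ⊆ Z, A ∈ F ∨ Z \ A ∈ F

/-- An unultra filter: every positive set splits into two positive pieces. -/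
def Unultra {α : Type u} (F : Set (Set α)) (Z : Set α) : Prop :=
  ∀ A ∈ posOf F Z, ∃ B ⊆ A, B ∈ posOf F Z ∧ A \ B ∈ posOf F Z

/-- The sum `⊕^E_{x ∈ X} Fx x` of the filters `Fx x` on the sets `Z x` over a filter `E` on `X`. -/
def filSum {α : Type u} {β : Type v} (X : Set α) (E : Set (Set α))
    (Z : α → Set β) (Fx : α → Set (Set β)) : Set (Set β) :=
  {A | A ⊆ (⋃ x ∈ X, Z x) ∧ {x | x ∈ X ∧ Z x ∩ A ∈ Fx x} ∈ E}

/-- The sum `⊕_{ζ<ξ} F ζ` over the filter of co-bounded subsets of `ξ`. -/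
def cobddSum {α : Type u} (ξ : Ordinal.{0}) (Z : Ordinal.{0} → Set α)
    (F : Ordinal.{0} → Set (Set α)) : Set (Set α) :=
  {A | A ⊆ (⋃ ζ ∈ Set.Iio ξ, Z ζ) ∧ ∃ β < ξ, ∀ ζ, β ≤ ζ → ζ < ξ → Z ζ ∩ A ∈ F ζ}

/-- A triple `(α, Z, F)`: an ordinal, a set of ordinals and a family of subsets of `Z`
(intended to be a filter on `Z`). -/
structure LocalFilter : Type 1 where
  a : Ordinal.{0}
  Z : Set Ordinal.{0}
  F : Set (Set Ordinal.{0})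

/-- A system of local filters on `lam`. -/
def IsLFS (lam : Cardinal.{0}) (S : Set LocalFilter) : Prop :=
  (∀ t ∈ S, t.Z ⊆ Set.Iio lam.ord ∧ #t.Z < Cardinal.lift.{1} lam ∧
      IsLeast t.Z t.a ∧ IsFilterOn t.F t.Z) ∧
    ∀ β < lam.ord, ∃ t ∈ S, β ≤ t.a

/-- The family `Q*_lam(S)`. -/
def Qstar (lam : Cardinal.{0}) (S : Set LocalFilter) : Set (Set LocalFilter) :=
  {r | r ⊆ S ∧ #r = Cardinal.lift.{1} lam ∧
    ∀ ξ : Ordinal.{0}, #{t | t ∈ r ∧ t.a = ξ} < Cardinal.lift.{1} lam}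

/-- The filter `fil(r)` on `lam` generated by `r`. -/
def fil (lam : Cardinal.{0}) (r : Set LocalFilter) : Set (Set Ordinal.{0}) :=
  {A | A ⊆ Set.Iio lam.ord ∧ ∃ ε < lam.ord, ∀ t ∈ r, ε ≤ t.a → A ∩ t.Z ∈ t.F}

/-- `r` is strongly disjoint. -/
def StronglyDisjoint (r : Set LocalFilter) : Prop :=
  (∀ s ∈ r, ∀ t ∈ r, s.a = t.a → s = t) ∧
    ∀ s ∈ r, ∀ t ∈ r, s.a < t.a → s.Z ⊆ Set.Iio t.a

/-- The family `Q⁰_lam(S)` of strongly disjoint members of `Q*_lam(S)`. -/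
def Qzero (lam : Cardinal.{0}) (S : Set LocalFilter) : Set (Set LocalFilter) :=
  {r | r ∈ Qstar lam S ∧ StronglyDisjoint r}

/-- `fil(H) = ⋃ { fil(r) : r ∈ H }`. -/
def filH (lam : Cardinal.{0}) (H : Set (Set LocalFilter)) : Set (Set Ordinal.{0}) :=
  {A | ∃ r ∈ H, A ∈ fil lam r}

/-- A uniform family of subsets of `lam`: every member has cardinality `lam`. -/
def IsUniform (lam : Cardinal.{0}) (D : Set (Set Ordinal.{0})) : Prop :=
  ∀ A ∈ D, #A = Cardinal.lift.{1} lam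

/-- `C` is a club (closed unbounded) subset of `lam`. -/
def IsClub (lam : Cardinal.{0}) (C : Set Ordinal.{0}) : Prop :=
  C ⊆ Set.Iio lam.ord ∧ (∀ β < lam.ord, ∃ γ ∈ C, β < γ) ∧
    ∀ δ, δ < lam.ord → δ ≠ 0 → (∀ β < δ, ∃ γ ∈ C, β < γ ∧ γ < δ) → δ ∈ C

/-- `St` is stationary in `lam`. -/
def IsStationary (lam : Cardinal.{0}) (St : Set Ordinal.{0}) : Prop :=
  ∀ C, IsClub lam C → (St ∩ C).Nonempty

/-- `D` is a weakly reasonable (ultra)filter on `lam`. -/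
def WeaklyReasonable (lam : Cardinal.{0}) (D : Set (Set Ordinal.{0})) : Prop :=
  ∀ f : Ordinal.{0} → Ordinal.{0},
    (∀ δ < lam.ord, f δ < lam.ord) →
    (∀ δ δ', δ ≤ δ' → δ' < lam.ord → f δ ≤ f δ') →
    (∀ β < lam.ord, ∃ δ < lam.ord, β ≤ f δ) →
    ∃ C, IsClub lam C ∧ (⋃ δ ∈ C, Set.Ico δ (δ + f δ)) ∉ D

/-- `e` is the increasing enumeration of `C ∪ {0}` (in order type `lam`). -/
def IsEnum (lam : Cardinal.{0}) (C : Set Ordinal.{0}) (e : Ordinal.{0} → Ordinal.{0}) : Prop :=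
  (∀ ξ η, ξ < η → η < lam.ord → e ξ < e η) ∧
    (∀ ξ < lam.ord, e ξ ∈ insert 0 C) ∧
    ∀ γ ∈ insert 0 C, ∃ ξ < lam.ord, e ξ = γ

/-- The quotient `D/C`, where `e` is the increasing enumeration of `C ∪ {0}`. -/
def quotFil (lam : Cardinal.{0}) (D : Set (Set Ordinal.{0})) (e : Ordinal.{0} → Ordinal.{0}) :
    Set (Set Ordinal.{0}) :=
  {A | A ⊆ Set.Iio lam.ord ∧ (⋃ ξ ∈ A, Set.Ico (e ξ) (e (ξ + 1))) ∈ D}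

/-- `d` is an increasing continuous sequence of ordinals below `lam` (indexed by `ξ < lam`). -/
def IncrCont (lam : Cardinal.{0}) (d : Ordinal.{0} → Ordinal.{0}) : Prop :=
  (∀ ξ < lam.ord, d ξ < lam.ord) ∧
    (∀ ξ η, ξ < η → η < lam.ord → d ξ < d η) ∧
    ∀ δ, δ < lam.ord → Order.IsSuccLimit δ → ∀ β < d δ, ∃ ξ < δ, β ≤ d ξ

/-- The full system `𝓕^ult` of local non-principal ultrafilters on `lam`. -/
def Fult (lam : Cardinal.{0}) : Set LocalFilter :=
  {t | t.a < lam.ord ∧ t.a ∈ t.Z ∧ t.Z ⊆ {o | t.a ≤ o ∧ o < lam.ord} ∧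
      t.Z.Infinite ∧ #t.Z < Cardinal.lift.{1} lam ∧ IsUltraOn t.F t.Z ∧
      ∀ x : Ordinal.{0}, ({x} : Set Ordinal.{0}) ∉ t.F}

/-- `Σ(p)`. -/
def SigmaP (lam : Cardinal.{0}) (p : Set LocalFilter) : Set LocalFilter :=
  {t | t ∈ Fult lam ∧ ∀ A ∈ t.F, ∃ s ∈ p, A ∩ s.Z ∈ s.F}

/-- A linked family `H ⊆ Q*_lam`. -/
def Linked (lam : Cardinal.{0}) (H : Set (Set LocalFilter)) : Prop :=
  H.Nonempty ∧ ∀ S : Set (Set LocalFilter), S ⊆ H → S.Finite → S.Nonempty →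
    #{α : Ordinal.{0} | ∃ t : LocalFilter, t.a = α ∧ ∀ p ∈ S, t ∈ SigmaP lam p} =
      Cardinal.lift.{1} lam

/-- A big family `H ⊆ Q*_lam`. -/
def Big (lam : Cardinal.{0}) (H : Set (Set LocalFilter)) : Prop :=
  H.Nonempty ∧ ∀ D ⊆ Fult lam, ∃ q ∈ H, q ⊆ D ∨ q ∩ D = ∅

/-- The condition `(⊕)^sum_S`. -/
def SumCond (lam : Cardinal.{0}) (S : Set LocalFilter) : Prop :=
  ∀ κ : Cardinal.{0}, ℵ₀ ≤ κ → κ < lam →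
    ∀ t : Ordinal.{0} → LocalFilter,
      (∀ ξ < κ.ord, t ξ ∈ S) →
      (∀ ξ ζ, ξ < ζ → ζ < κ.ord → (t ξ).Z ⊆ Set.Iio (t ζ).a) →
      ∃ E : Set (Set Ordinal.{0}), IsFilterOn E (Set.Iio κ.ord) ∧
        (∀ A ∈ E, #A = Cardinal.lift.{1} κ) ∧
        (LocalFilter.mk (t 0).a (⋃ ξ ∈ Set.Iio κ.ord, (t ξ).Z)
          (filSum (Set.Iio κ.ord) E (fun ξ => (t ξ).Z) (fun ξ => (t ξ).F))) ∈ S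

/-- `(<lam⁺)`-completeness of a subfamily `Q` of `Q*` with respect to `≤*`. -/
def Complete (lam : Cardinal.{0}) (Q : Set (Set LocalFilter)) : Prop :=
  ∀ γ : Ordinal.{0}, γ.card ≤ lam →
    ∀ p : Ordinal.{0} → Set LocalFilter,
      (∀ ξ < γ, p ξ ∈ Q) →
      (∀ ξ ζ, ξ ≤ ζ → ζ < γ → fil lam (p ξ) ⊆ fil lam (p ζ)) →
      ∃ q ∈ Q, ∀ ξ < γ, fil lam (p ξ) ⊆ fil lam q

/-- The full system `𝓕₀` of co-bounded filters on `lam`. -/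
def Fcobdd (lam : Cardinal.{0}) : Set LocalFilter :=
  {t | t.a ∈ t.Z ∧ t.Z ⊆ {o | t.a ≤ o ∧ o < lam.ord} ∧
      #t.Z < Cardinal.lift.{1} lam ∧ sSup t.Z ∉ t.Z ∧
      t.F = {A | A ⊆ t.Z ∧ ∃ β < sSup t.Z, ∀ x ∈ t.Z, β ≤ x → x ∈ A}}

/-- The `Ē`-closure of a system `S` of local filters (as an inductive family:
it is closed under `E κ`-sums of `κ`-sequences of previously obtained triples). -/
inductive EClos (lam : Cardinal.{0}) (E : Cardinal.{0} → Set (Set Ordinal.{0}))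
    (S : Set LocalFilter) : LocalFilter → Prop
  | base : ∀ t ∈ S, EClos lam E S t
  | sum : ∀ κ : Cardinal.{0}, ℵ₀ ≤ κ → κ < lam →
      ∀ t : Ordinal.{0} → LocalFilter,
        (∀ ξ < κ.ord, EClos lam E S (t ξ)) →
        (∀ ξ ζ, ξ < ζ → ζ < κ.ord → (t ξ).Z ⊆ Set.Iio (t ζ).a) →
        EClos lam E S (LocalFilter.mk (t 0).a (⋃ ξ ∈ Set.Iio κ.ord, (t ξ).Z)
          (filSum (Set.Iio κ.ord) (E κ) (fun ξ => (t ξ).Z) (fun ξ => (t ξ).F)))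

/-- The full system `𝓕^unu` of local unultra filters on `lam`. -/
def Funu (lam : Cardinal.{0}) : Set LocalFilter :=
  {t | t.Z.Nonempty ∧ t.Z ⊆ Set.Iio lam.ord ∧ #t.Z < Cardinal.lift.{1} lam ∧
      IsLeast t.Z t.a ∧ IsFilterOn t.F t.Z ∧ Unultra t.F t.Z}

/-- A pararegularity system for `F` (on `Z`), indexed by finite subsets of `κ`. -/
def PRSystem (κ : Cardinal.{0}) (F : Set (Set Ordinal.{0})) (Z : Set Ordinal.{0}) : Prop :=
  ∃ A : Finset Ordinal.{0} → Set Ordinal.{0},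
    (∀ u : Finset Ordinal.{0}, ↑u ⊆ Set.Iio κ.ord → A u ∈ F) ∧
    (∀ u v : Finset Ordinal.{0}, ↑v ⊆ Set.Iio κ.ord → u ⊆ v → A v ⊆ A u) ∧
    (∀ U : Set Ordinal.{0}, U ⊆ Set.Iio κ.ord → U.Infinite →
      (⋂ ξ ∈ U, A {ξ}) = ∅) ∧
    F = {B | B ⊆ Z ∧ ∃ u : Finset Ordinal.{0}, ↑u ⊆ Set.Iio κ.ord ∧ A u ⊆ B}

/-- `F` is a pararegular filter on `Z` (with `α = min Z`). -/
def Pararegular (lam : Cardinal.{0}) (F : Set (Set Ordinal.{0})) (Z : Set Ordinal.{0})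
    (α : Ordinal.{0}) : Prop :=
  ∃ κ : Cardinal.{0}, (Ordinal.omega0 + α).card ≤ κ ∧ κ < lam ∧ PRSystem κ F Z

/-- `F` is a strongly pararegular filter on `Z` (with `α = min Z`). -/
def StronglyPararegular (lam : Cardinal.{0}) (F : Set (Set Ordinal.{0})) (Z : Set Ordinal.{0})
    (α : Ordinal.{0}) : Prop :=
  ∃ κ : Cardinal.{0}, 2 ^ (Ordinal.omega0 + α).card ≤ κ ∧ κ < lam ∧ PRSystem κ F Z

/-- The full system `𝓕^pr` of local pararegular filters on `lam`. -/
def Fpr (lam : Cardinal.{0}) : Set LocalFilter :=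
  {t | t.Z.Infinite ∧ t.Z ⊆ Set.Iio lam.ord ∧ #t.Z < Cardinal.lift.{1} lam ∧
      IsLeast t.Z t.a ∧ IsFilterOn t.F t.Z ∧ Pararegular lam t.F t.Z t.a}

/-- The full system `𝓕^spr` of local strongly pararegular filters on `lam`. -/
def Fspr (lam : Cardinal.{0}) : Set LocalFilter :=
  {t | t.Z.Infinite ∧ t.Z ⊆ Set.Iio lam.ord ∧ #t.Z < Cardinal.lift.{1} lam ∧
      IsLeast t.Z t.a ∧ IsFilterOn t.F t.Z ∧ StronglyPararegular lam t.F t.Z t.a}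

/-- The space `^lam lam`. -/
def Fn (lam : Cardinal.{0}) : Type 1 := ↥(Set.Iio lam.ord) → ↥(Set.Iio lam.ord)

/-- The basic open set `O_s` determined by a partial function `s` of length `γ`. -/
def basicOpen (lam : Cardinal.{0}) (γ : Ordinal.{0}) (s : Ordinal.{0} → Ordinal.{0}) : Set (Fn lam) :=
  {f | ∀ ξ : ↥(Set.Iio lam.ord), (ξ : Ordinal.{0}) < γ → ((f ξ : Ordinal.{0}) = s ξ)}

/-- `X ⊆ ^lam lam` is nowhere dense. -/
def NwDense (lam : Cardinal.{0}) (X : Set (Fn lam)) : Prop :=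
  ∀ γ < lam.ord, ∀ s : Ordinal.{0} → Ordinal.{0}, (∀ ξ < γ, s ξ < lam.ord) →
    ∃ γ', γ ≤ γ' ∧ γ' < lam.ord ∧ ∃ s' : Ordinal.{0} → Ordinal.{0},
      (∀ ξ < γ', s' ξ < lam.ord) ∧ (∀ ξ < γ, s' ξ = s ξ) ∧
      basicOpen lam γ' s' ∩ X = ∅

/-- `X` belongs to the ideal `M^lam_{lam,lam}`: it is covered by `lam` many
nowhere dense sets. -/
def MeagerSet (lam : Cardinal.{0}) (X : Set (Fn lam)) : Prop :=
  ∃ A : Ordinal.{0} → Set (Fn lam), (∀ ξ < lam.ord, NwDense lam (A ξ)) ∧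
    X ⊆ ⋃ ξ ∈ Set.Iio lam.ord, A ξ

/-- `cov(M^lam_{lam,lam})`. -/
def covM (lam : Cardinal.{0}) : Cardinal.{1} :=
  sInf {c | ∃ 𝓐 : Set (Set (Fn lam)), (∀ X ∈ 𝓐, MeagerSet lam X) ∧
    ⋃₀ 𝓐 = Set.univ ∧ #𝓐 = c}

/-- Nodes of trees of sequences of ordinals: a pair (level, function). -/
abbrev TNode : Type 1 := Ordinal.{0} × (Ordinal.{0} → Ordinal.{0})

/-- Truncation of a function below `γ` (with value `0` elsewhere). -/
def truncF (γ : Ordinal.{0}) (f : Ordinal.{0} → Ordinal.{0}) : Ordinal.{0} → Ordinal.{0} :=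
  fun ξ => if ξ < γ then f ξ else 0

/-- `T` is a tree of height `lam` of (normalized) sequences of ordinals `< lam`. -/
def IsTree (lam : Cardinal.{0}) (T : Set TNode) : Prop :=
  (∀ x ∈ T, x.1 < lam.ord ∧ (∀ ξ < x.1, x.2 ξ < lam.ord) ∧ x.2 = truncF x.1 x.2) ∧
    ∀ x ∈ T, ∀ γ ≤ x.1, (γ, truncF γ x.2) ∈ T

/-- The `γ`-th level of `T`. -/
def treeLevel (T : Set TNode) (γ : Ordinal.{0}) : Set TNode := {x | x ∈ T ∧ x.1 = γ}

/-- `T` is a `lam`-Kurepa tree: a tree of height `lam` all of whose levels are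
nonempty of cardinality `< lam`. -/
def IsKurepaTree (lam : Cardinal.{0}) (T : Set TNode) : Prop :=
  IsTree lam T ∧
    ∀ γ < lam.ord, (treeLevel T γ).Nonempty ∧
      #(treeLevel T γ) < Cardinal.lift.{1} lam

/-- The set of `lam`-branches of `T` (normalized functions all of whose proper
initial segments lie in `T`). -/
def branches (lam : Cardinal.{0}) (T : Set TNode) : Set (Ordinal.{0} → Ordinal.{0}) :=
  {f | f = truncF lam.ord f ∧ ∀ γ < lam.ord, (γ, truncF γ f) ∈ T}

/-!
Linkedness provides `λ` many levels `α` carrying a triple of `Σ(p₀) ∩ … ∩ Σ(pₙ)`; choosing one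
triple per level gives `q ∈ Q*_λ`. Because the triples of `Σ(p)` are ultrafilters, every set in
`fil(p)` is eventually in all of them, so `fil(pᵢ) ⊆ fil(q)`. By regularity of `λ`, `q` has
triples above every level, so `fil(q)` is a proper filter, whence the finite intersection
property of `fil(H)`.
-/

section

variable {lam : Cardinal.{0}}

lemma IsFilterOn.nonempty_of_mem {α : Type u} {F : Set (Set α)} {Z A : Set α}
    (hF : IsFilterOn F Z) (hA : A ∈ F) : A.Nonempty :=
  nonempty_iff_ne_empty.2 fun h => hF.2.2.2.2 (h ▸ hA)

lemma Fult.isFilterOn {t : LocalFilter} (ht : t ∈ Fult lam) : IsFilterOn t.F t.Z :=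
  ht.2.2.2.2.2.1.1

lemma Qstar_mono {S S' : Set LocalFilter} (h : S ⊆ S') : Qstar lam S ⊆ Qstar lam S' :=
  fun _ ⟨hr, hcard, hfib⟩ => ⟨hr.trans h, hcard, hfib⟩

lemma fil_anti {r r' : Set LocalFilter} (h : r ⊆ r') : fil lam r' ⊆ fil lam r :=
  fun _ ⟨hA, ε, hε, hr'⟩ => ⟨hA, ε, hε, fun t ht => hr' t (h ht)⟩

lemma inter_mem_fil {q : Set LocalFilter} (hF : ∀ t ∈ q, IsFilterOn t.F t.Z)
    {A B : Set Ordinal.{0}} (hA : A ∈ fil lam q) (hB : B ∈ fil lam q) : A ∩ B ∈ fil lam q := by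
  obtain ⟨hAsub, ε, hε, hAq⟩ := hA
  obtain ⟨-, ε', hε', hBq⟩ := hB
  refine ⟨inter_subset_left.trans hAsub, max ε ε', max_lt hε hε', fun t ht hta => ?_⟩
  rw [inter_inter_distrib_right]
  exact (hF t ht).2.2.2.1 _ (hAq t ht (le_of_max_le_left hta)) _
    (hBq t ht (le_of_max_le_right hta))

lemma inter_sInter_mem_fil {q : Set LocalFilter}
    (hF : ∀ t ∈ q, IsFilterOn t.F t.Z) {S : Set (Set Ordinal.{0})} (hS : S.Finite)
    (hSq : S ⊆ fil lam q) {B : Set Ordinal.{0}} (hB : B ∈ fil lam q) :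
    B ∩ ⋂₀ S ∈ fil lam q := by
  induction S, hS using Set.Finite.induction_on generalizing B with
  | empty => simpa using hB
  | @insert C S _ _ ih =>
    rw [sInter_insert, ← inter_assoc]
    exact ih (fun D hD => hSq (mem_insert_of_mem _ hD))
      (inter_mem_fil hF hB (hSq (mem_insert _ _)))

lemma sInter_mem_fil {q : Set LocalFilter}
    (hF : ∀ t ∈ q, IsFilterOn t.F t.Z) {S : Set (Set Ordinal.{0})} (hS : S.Finite)
    (hSne : S.Nonempty) (hSq : S ⊆ fil lam q) : ⋂₀ S ∈ fil lam q := by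
  obtain ⟨A, hA⟩ := hSne
  simpa [inter_eq_right.2 (sInter_subset_of_mem hA)] using inter_sInter_mem_fil hF hS hSq (hSq hA)

lemma exists_mem_Qstar_of_mk_eq (hlam : 1 < lam) {Y : Set LocalFilter}
    (hY : #{α : Ordinal.{0} | ∃ t : LocalFilter, t.a = α ∧ t ∈ Y} = Cardinal.lift.{1} lam) :
    ∃ q, q ∈ Qstar lam Y := by
  choose T hTa hTY using fun α : {α : Ordinal.{0} | ∃ t : LocalFilter, t.a = α ∧ t ∈ Y} => α.2
  have hTinj : Function.Injective T := fun α β h => Subtype.ext ((hTa α).symm.trans (h ▸ hTa β))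
  refine ⟨range T, range_subset_iff.2 hTY, (mk_range_eq T hTinj).trans hY, fun ξ => ?_⟩
  have hfib : {t | t ∈ range T ∧ t.a = ξ}.Subsingleton := by
    rintro _ ⟨⟨α, rfl⟩, hα⟩ _ ⟨⟨β, rfl⟩, hβ⟩
    rw [hTinj.eq_iff]
    exact Subtype.ext ((hTa α).symm.trans (hα.trans (hβ.symm.trans (hTa β))))
  exact hfib.cardinalMk_le_one.trans_lt (by simpa using hlam)

lemma exists_lt_ord_forall_lt_of_mk_lt (hreg : lam.IsRegular) {X : Set Ordinal.{0}}
    (hX : ∀ x ∈ X, x < lam.ord) (hcard : #X < Cardinal.lift.{1} lam) :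
    ∃ b < lam.ord, ∀ x ∈ X, x < b := by
  have hcof : (Ordinal.lift.{1} lam.ord).cof = Cardinal.lift.{1} lam := by
    rw [Cardinal.lift_ord, hreg.lift.cof_ord]
  have hbdd : BddAbove ((· + 1) '' X) :=
    ⟨lam.ord + 1, by rintro _ ⟨x, hx, rfl⟩; exact add_le_add_left (hX x hx).le 1⟩
  refine ⟨_, Ordinal.sSup_add_one_lt_of_lt_cof (hcof ▸ hcard) hX, fun x hx => ?_⟩
  exact (Order.lt_add_one_iff.2 le_rfl).trans_le (le_csSup hbdd (mem_image_of_mem _ hx))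

lemma mk_lt_of_mem_Qstar (hreg : lam.IsRegular) {S p : Set LocalFilter}
    (hp : p ∈ Qstar lam S) {ε : Ordinal.{0}} (hε : ε < lam.ord) :
    #{s | s ∈ p ∧ s.a < ε} < Cardinal.lift.{1} lam := by
  have hsub : {s | s ∈ p ∧ s.a < ε} ⊆ ⋃ ξ : Iio ε, {s | s ∈ p ∧ s.a = ξ} :=
    fun s ⟨hs, hsa⟩ => mem_iUnion.2 ⟨⟨s.a, hsa⟩, hs, rfl⟩
  refine (mk_le_mk_of_subset hsub).trans_lt (mk_iUnion_le_sum_mk.trans_lt ?_)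
  refine sum_lt_of_isRegular hreg.lift ?_ fun ξ => hp.2.2 ξ
  rw [Cardinal.mk_Iio_ordinal]
  exact Cardinal.lift_lt.2 (Cardinal.lt_ord.1 hε)

lemma exists_le_a_of_mem_Qstar (hreg : lam.IsRegular) {S q : Set LocalFilter}
    (hq : q ∈ Qstar lam S) {ε : Ordinal.{0}} (hε : ε < lam.ord) : ∃ t ∈ q, ε ≤ t.a := by
  by_contra! h
  have hsub : q ⊆ {s | s ∈ q ∧ s.a < ε} := fun s hs => ⟨hs, h s hs⟩
  exact ((mk_le_mk_of_subset hsub).trans_lt (mk_lt_of_mem_Qstar hreg hq hε)).ne hq.2.1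

lemma exists_Z_subset_Iio_of_mem_Qstar (hreg : lam.IsRegular) {p : Set LocalFilter}
    (hp : p ∈ Qstar lam (Fult lam)) {ε : Ordinal.{0}} (hε : ε < lam.ord) :
    ∃ ε' < lam.ord, ∀ s ∈ p, s.a < ε → s.Z ⊆ Iio ε' := by
  set P := {s | s ∈ p ∧ s.a < ε}
  have hU : #(⋃ s : P, s.1.Z) < Cardinal.lift.{1} lam :=
    mk_iUnion_le_sum_mk.trans_lt <| sum_lt_of_isRegular hreg.lift
      (mk_lt_of_mem_Qstar hreg hp hε) fun s => (hp.1 s.2.1).2.2.2.2.1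
  obtain ⟨ε', hε', hlt⟩ := exists_lt_ord_forall_lt_of_mk_lt hreg (X := ⋃ s : P, s.1.Z)
    (fun x hx => by
      obtain ⟨s, hx⟩ := mem_iUnion.1 hx
      exact ((hp.1 s.2.1).2.2.1 hx).2) hU
  exact ⟨ε', hε', fun s hs hsa x hx => hlt x (mem_iUnion.2 ⟨⟨s, hs, hsa⟩, hx⟩)⟩

/-- If `t.Z \ A ∈ t` for a high `t ∈ Σ(p)`, then `t.Z \ A` is in some `s ∈ p`; `s` lies above
the witness `ε` of `A ∈ fil(p)`, since the triples of `p` below `ε` live below `t.a`. But then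
`A` is in `s` too. -/
lemma fil_subset_fil_SigmaP (hreg : lam.IsRegular) {p : Set LocalFilter}
    (hp : p ∈ Qstar lam (Fult lam)) : fil lam p ⊆ fil lam (SigmaP lam p) := by
  rintro A ⟨hAsub, ε, hε, hA⟩
  obtain ⟨ε', hε', hbound⟩ := exists_Z_subset_Iio_of_mem_Qstar hreg hp hε
  refine ⟨hAsub, ε', hε', fun t ⟨htF, htSig⟩ hta => ?_⟩
  obtain ⟨-, -, htZ, -, -, htU, -⟩ := htF
  refine (htU.2 (A ∩ t.Z) inter_subset_right).resolve_right fun hcompl => ?_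
  rw [sdiff_inter_self_eq_sdiff] at hcompl
  obtain ⟨s, hs, hsF⟩ := htSig _ hcompl
  have hsFil := Fult.isFilterOn (hp.1 hs)
  obtain ⟨x, ⟨hxt, -⟩, hxs⟩ := hsFil.nonempty_of_mem hsF
  have hsa : ε ≤ s.a := not_lt.1 fun hsa =>
    (lt_of_lt_of_le (hbound s hs hsa hxs) hta).not_ge (htZ hxt).1
  obtain ⟨y, ⟨hyA, -⟩, hyA', -⟩ := hsFil.nonempty_of_mem (hsFil.2.2.2.1 _ (hA s hs hsa) _ hsF)
  exact hyA'.2 hyA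

lemma nonempty_of_mem_fil (hreg : lam.IsRegular) {S q : Set LocalFilter} (hq : q ∈ Qstar lam S)
    (hF : ∀ t ∈ q, IsFilterOn t.F t.Z) {A : Set Ordinal.{0}} (hA : A ∈ fil lam q) :
    A.Nonempty := by
  obtain ⟨-, ε, hε, hAq⟩ := hA
  obtain ⟨t, ht, hta⟩ := exists_le_a_of_mem_Qstar hreg hq hε
  exact ((hF t ht).nonempty_of_mem (hAq t ht hta)).mono inter_subset_left

lemma Linked.exists_upper_bound (hreg : lam.IsRegular)
    {H : Set (Set LocalFilter)} (hH : H ⊆ Qstar lam (Fult lam)) (hlin : Linked lam H)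
    {S : Set (Set LocalFilter)} (hS : S ⊆ H) (hfin : S.Finite) (hne : S.Nonempty) :
    ∃ q ∈ Qstar lam (Fult lam), ∀ p ∈ S, fil lam p ⊆ fil lam q := by
  obtain ⟨q, hqY, hq⟩ := exists_mem_Qstar_of_mk_eq (one_lt_aleph0.trans_le hreg.aleph0_le)
    (Y := {t | ∀ p ∈ S, t ∈ SigmaP lam p}) (hlin.2 S hS hfin hne)
  obtain ⟨p₀, hp₀⟩ := hne
  refine ⟨q, Qstar_mono (fun t ht => (ht p₀ hp₀).1) ⟨hqY, hq⟩, fun p hp => ?_⟩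
  exact (fil_subset_fil_SigmaP hreg (hH (hS hp))).trans (fil_anti fun t ht => hqY ht p hp)

end

theorem stmt15_general (lam : Cardinal.{0}) (hreg : lam.IsRegular)
    (H : Set (Set LocalFilter)) (hH : H ⊆ Qstar lam (Fult lam))
    (hlin : Linked lam H) :
    (∀ S : Set (Set LocalFilter), S ⊆ H → S.Finite → S.Nonempty →
      ∃ q ∈ Qstar lam (Fult lam), ∀ p ∈ S, fil lam p ⊆ fil lam q) ∧
    (∀ S : Set (Set Ordinal.{0}), S ⊆ filH lam H → S.Finite → S.Nonempty →
      (⋂₀ S).Nonempty) := by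
  refine ⟨fun S => hlin.exists_upper_bound hreg hH, fun S hS hfin hne => ?_⟩
  choose r hrH hAr using fun A : S => hS A.2
  have : Finite S := hfin.to_subtype
  obtain ⟨A₀, hA₀⟩ := hne
  obtain ⟨q, hq, hrq⟩ := hlin.exists_upper_bound hreg hH (range_subset_iff.2 hrH)
    (finite_range r) ⟨r ⟨A₀, hA₀⟩, mem_range_self _⟩
  have hF : ∀ t ∈ q, IsFilterOn t.F t.Z := fun t ht => Fult.isFilterOn (hq.1 ht)
  have hSq : S ⊆ fil lam q := fun A hA => hrq _ (mem_range_self ⟨A, hA⟩) (hAr ⟨A, hA⟩)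
  exact nonempty_of_mem_fil hreg hq hF (sInter_mem_fil hF hfin ⟨A₀, hA₀⟩ hSq)

/-- Observation 2.8(1): a linked family has finite `≤*`-upper bounds and its
generated family has the finite intersection property. -/
theorem stmt15 (lam : Cardinal.{0}) (hreg : lam.IsRegular) (hunc : ℵ₀ < lam)
    (H : Set (Set LocalFilter)) (hH : H ⊆ Qstar lam (Fult lam))
    (hlin : Linked lam H) :
    (∀ S : Set (Set LocalFilter), S ⊆ H → S.Finite → S.Nonempty →
      ∃ q ∈ Qstar lam (Fult lam), ∀ p ∈ S, fil lam p ⊆ fil lam q) ∧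
    (∀ S : Set (Set Ordinal.{0}), S ⊆ filH lam H → S.Finite → S.Nonempty →
      (⋂₀ S).Nonempty) :=
  stmt15_general lam hreg H hH hlin

end

end RS889
end

section
/- Assume 2^λ = λ⁺. Then there is a uniform ultrafilter D on λ such that fil(p) ⊄ D for every p ∈ Q*_λ(𝓕^pr); that is, D contains no fil(p) with p ∈ Q*_λ(𝓕^pr). -/
namespace RS889

noncomputable section

open Cardinal Set

universe u v

/-!
Enumerate in order type `λ⁺ = 2^λ` all subsets `X` of `λ` and all `p ∈ Q*_λ(𝓕^pr)`; there are
only `2^λ` of the latter because a pararegular filter is generated by at most `λ` sets. Along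
this enumeration build a family `P` of subsets of `λ` all of whose finite intersections have
size `λ`, each stage having at most `λ` members. A task `X` is met by adding `X` or `λ \ X`.
A task `p` is met by adding `λ \ A` for an `A ∈ fil(p)` that keeps all current finite
intersections of size `λ`: run a `λ`-sequence `z` through these intersections, each intersection
visited `λ` times and each term chosen above every `Z` of `p` whose minimum lies below an
earlier term. Then each `Z` contains at most one term of `z`; a pararegular filter has empty
intersection, so some member of `F` omits that term, and the union `A` of these members lies in
`fil(p)` and misses `z`. The filter generated by `P` is the required uniform ultrafilter.
-/

section FiniteCharacter

variable {β : Type u}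

def FinitelySatisfies (ok : Set β → Prop) (P : Set β) : Prop :=
  ∀ s ⊆ P, s.Finite → ok s

lemma finitelySatisfies_iUnion {ι : Type*} {ok : Set β → Prop} (h₀ : ok ∅) {f : ι → Set β}
    (hf : Directed (· ⊆ ·) f) (h : ∀ i, FinitelySatisfies ok (f i)) :
    FinitelySatisfies ok (⋃ i, f i) := by
  intro s hs hfin
  rcases isEmpty_or_nonempty ι with hι | hι
  · rwa [subset_eq_empty hs (by simp)]
  · obtain ⟨i, hi⟩ := hf.exists_mem_subset_of_finset_subset_biUnion (s := hfin.toFinset)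
      (by simpa using hs)
    exact h i s (by simpa using hi) hfin

lemma finitelySatisfies_insert_iff {ok : Set β → Prop} (hok : Antitone ok) {P : Set β} {x : β} :
    FinitelySatisfies ok (insert x P) ↔ ∀ s ⊆ P, s.Finite → ok (insert x s) := by
  refine ⟨fun h s hs hfin => h _ (insert_subset_insert hs) (hfin.insert x), fun h t ht hfin => ?_⟩
  refine hok (subset_insert_sdiff_singleton x t) (h _ ?_ hfin.sdiff)
  simpa [sdiff_singleton_subset_iff] using ht

theorem exists_finitelySatisfies_of_wellOrder [Nonempty β] {ι : Type u} [LinearOrder ι]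
    [WellFoundedLT ι] {c : Cardinal.{u}} (hι : ∀ i : ι, #(Iio i) < c) {ok : Set β → Prop}
    (h₀ : ok ∅) (H : ι → Set β)
    (hext : ∀ P i, FinitelySatisfies ok P → #P < c → ∃ S ∈ H i,
      FinitelySatisfies ok (insert S P)) :
    ∃ P, FinitelySatisfies ok P ∧ ∀ i, ∃ S ∈ H i, S ∈ P := by
  choose! ext hext_mem hext_ok using hext
  let S : ι → β := wellFounded_lt.fix fun i ih => ext (range fun j : Iio i => ih j j.2) i
  have hS : ∀ i, S i = ext (S '' Iio i) i := fun i => by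
    rw [image_eq_range]; exact wellFounded_lt.fix_eq _ i
  have hIic : ∀ i, FinitelySatisfies ok (S '' Iio i) → FinitelySatisfies ok (S '' Iic i) :=
    fun i hi => by
      rw [← Iio_insert, image_insert_eq, hS i]
      exact hext_ok _ i hi (mk_image_le.trans_lt (hι i))
  have hmono : Monotone fun i => S '' Iic i := fun i j hij => image_mono (Iic_subset_Iic.2 hij)
  have hIio : ∀ i, FinitelySatisfies ok (S '' Iio i) := by
    intro i
    induction i using WellFoundedLT.induction with
    | _ i ih =>
      have : S '' Iio i = ⋃ j : Iio i, S '' Iic (j : ι) := by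
        ext x; simp only [mem_image, mem_iUnion, mem_Iio, mem_Iic]
        constructor
        · rintro ⟨j, hj, rfl⟩; exact ⟨⟨j, hj⟩, j, le_rfl, rfl⟩
        · rintro ⟨⟨j, hj⟩, k, hk, rfl⟩; exact ⟨k, hk.trans_lt hj, rfl⟩
      rw [this]
      exact finitelySatisfies_iUnion h₀ (Monotone.directed_le fun _ _ h => hmono h)
        fun j => hIic j (ih j j.2)
  refine ⟨⋃ i, S '' Iic i, finitelySatisfies_iUnion h₀ hmono.directed_le
    fun i => hIic i (hIio i), fun i => ⟨S i, ?_, mem_iUnion.2 ⟨i, i, mem_Iic.2 le_rfl, rfl⟩⟩⟩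
  rw [hS i]
  exact hext_mem _ i (hIio i) (mk_image_le.trans_lt (hι i))

theorem exists_finitelySatisfies_of_mk_le [Nonempty β] {τ : Type u} {c : Cardinal.{u}}
    (hτ : #τ ≤ c) {ok : Set β → Prop} (h₀ : ok ∅) (H : τ → Set β)
    (hext : ∀ P T, FinitelySatisfies ok P → #P < c → ∃ S ∈ H T,
      FinitelySatisfies ok (insert S P)) :
    ∃ P, FinitelySatisfies ok P ∧ ∀ T, ∃ S ∈ H T, S ∈ P := by
  rcases isEmpty_or_nonempty τ with hτe | hτe
  · exact ⟨∅, fun s hs _ => by rwa [subset_eq_empty hs rfl], isEmptyElim⟩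
  obtain ⟨e⟩ : Nonempty (τ ↪ c.ord.ToType) := by rwa [← le_def, mk_ord_toType]
  obtain ⟨P, hP, hmeet⟩ := exists_finitelySatisfies_of_wellOrder
    (fun i => by simpa using mk_Iio_lt i (by simp)) h₀ (H ∘ Function.invFun e)
    fun P i => hext P _
  refine ⟨P, hP, fun T => ?_⟩
  simpa [Function.leftInverse_invFun e.injective T] using hmeet (e T)

end FiniteCharacter

section GeneratedFilter

variable {α : Type u}

def filterGen (Z : Set α) (P : Set (Set α)) : Set (Set α) :=
  {A | A ⊆ Z ∧ ∃ s ⊆ P, s.Finite ∧ Z ∩ ⋂₀ s ⊆ A}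

lemma mem_filterGen {Z A : Set α} {P : Set (Set α)} (hA : A ∈ P) (hAZ : A ⊆ Z) :
    A ∈ filterGen Z P :=
  ⟨hAZ, {A}, singleton_subset_iff.2 hA, finite_singleton A, by simp⟩

lemma isFilterOn_filterGen {Z : Set α} {P : Set (Set α)}
    (hP : ∀ s ⊆ P, s.Finite → (Z ∩ ⋂₀ s).Nonempty) : IsFilterOn (filterGen Z P) Z := by
  refine ⟨fun A hA => hA.1, ⟨subset_rfl, ∅, empty_subset P, finite_empty, inter_subset_left⟩,
    fun A ⟨_, s, hs, hfin, hsA⟩ B hAB hBZ => ⟨hBZ, s, hs, hfin, hsA.trans hAB⟩,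
    fun A ⟨hAZ, s, hs, hfin, hsA⟩ B ⟨_, t, ht, htfin, htB⟩ =>
      ⟨inter_subset_left.trans hAZ, s ∪ t, union_subset hs ht, hfin.union htfin, ?_⟩, ?_⟩
  · rw [sInter_union]
    exact fun x hx => ⟨hsA ⟨hx.1, hx.2.1⟩, htB ⟨hx.1, hx.2.2⟩⟩
  · rintro ⟨-, s, hs, hfin, hsub⟩
    obtain ⟨x, hx⟩ := hP s hs hfin
    exact hsub hx

end GeneratedFilter

def LargeInter (lam : Cardinal.{0}) (s : Set (Set Ordinal.{0})) : Prop :=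
  #↥(Iio lam.ord ∩ ⋂₀ s) = lift.{1} lam

lemma mk_Iio_ord (lam : Cardinal.{0}) : #(Iio lam.ord) = lift.{1} lam := by
  rw [mk_Iio_ordinal, card_ord]

lemma mk_le_of_subset_Iio_ord {lam : Cardinal.{0}} {A : Set Ordinal.{0}}
    (hA : A ⊆ Iio lam.ord) : #A ≤ lift.{1} lam :=
  (mk_le_mk_of_subset hA).trans (mk_Iio_ord lam).le

lemma largeInter_antitone (lam : Cardinal.{0}) : Antitone (LargeInter lam) := fun _ _ hst ht =>
  le_antisymm (mk_le_of_subset_Iio_ord inter_subset_left)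
    (ht ▸ mk_le_mk_of_subset (inter_subset_inter_right _ (sInter_subset_sInter hst)))

lemma finitelySatisfies_largeInter_insert_iff {lam : Cardinal.{0}} {P : Set (Set Ordinal.{0})}
    {S : Set Ordinal.{0}} :
    FinitelySatisfies (LargeInter lam) (insert S P) ↔
      ∀ s ⊆ P, s.Finite → #↥(Iio lam.ord ∩ ⋂₀ s ∩ S) = lift.{1} lam := by
  rw [finitelySatisfies_insert_iff (largeInter_antitone lam)]
  simp only [LargeInter, sInter_insert, inter_comm S, inter_assoc]

/-- If neither could be added, two finite subfamilies would cover a large intersection by two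
small sets. -/
lemma finitelySatisfies_insert_or_compl {lam : Cardinal.{0}} (hlam : ℵ₀ ≤ lam)
    {P : Set (Set Ordinal.{0})} (hP : FinitelySatisfies (LargeInter lam) P) (X : Set Ordinal.{0}) :
    FinitelySatisfies (LargeInter lam) (insert X P) ∨
      FinitelySatisfies (LargeInter lam) (insert (Iio lam.ord \ X) P) := by
  simp only [finitelySatisfies_largeInter_insert_iff]
  by_contra! ⟨⟨s, hs, hsfin, hsX⟩, ⟨t, ht, htfin, htX⟩⟩
  have hsmall : ∀ {A : Set Ordinal.{0}}, A ⊆ Iio lam.ord → #A ≠ lift.{1} lam → #A < lift.{1} lam :=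
    fun hA hne => (mk_le_of_subset_Iio_ord hA).lt_of_ne hne
  have hcover : Iio lam.ord ∩ ⋂₀ (s ∪ t) ⊆
      (Iio lam.ord ∩ ⋂₀ s ∩ X) ∪ (Iio lam.ord ∩ ⋂₀ t ∩ (Iio lam.ord \ X)) := by
    rintro x ⟨hx, hxs⟩
    rw [sInter_union] at hxs
    by_cases hxX : x ∈ X
    exacts [Or.inl ⟨⟨hx, hxs.1⟩, hxX⟩, Or.inr ⟨⟨hx, hxs.2⟩, hx, hxX⟩]
  refine (hP _ (union_subset hs ht) (hsfin.union htfin)).not_lt ?_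
  refine (mk_le_mk_of_subset hcover).trans_lt ((mk_union_le _ _).trans_lt ?_)
  exact add_lt_of_lt (by simpa using hlam) (hsmall (fun x hx => hx.1.1) hsX)
    (hsmall (fun x hx => hx.1.1) htX)

lemma mk_setOf_finset_subset_le {α : Type u} (s : Set α) :
    #{u : Finset α | ↑u ⊆ s} ≤ max #s ℵ₀ := by
  classical
  have hrange : {u : Finset α | ↑u ⊆ s} ⊆
      range fun v : Finset s => v.map (Function.Embedding.subtype _) :=
    fun u hu => ⟨u.subtype (· ∈ s), Finset.subtype_map_of_mem hu⟩
  refine (mk_le_mk_of_subset hrange).trans (mk_range_le.trans ?_)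
  rcases finite_or_infinite s with hs | hs
  · exact (mk_le_aleph0 (α := Finset s)).trans (le_max_right _ _)
  · exact (mk_finset_of_infinite s).le.trans (le_max_left _ _)

lemma PRSystem.exists_mem_notMem {κ : Cardinal.{0}} {F : Set (Set Ordinal.{0})}
    {Z : Set Ordinal.{0}} (hκ : ℵ₀ ≤ κ) (h : PRSystem κ F Z) (x : Ordinal.{0}) :
    ∃ B ∈ F, x ∉ B := by
  obtain ⟨A, hAF, -, hempty, -⟩ := h
  have hinf : (Iio κ.ord).Infinite := by
    rw [← infinite_coe_iff, Cardinal.infinite_iff, mk_Iio_ord]; simpa using hκ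
  have hx : x ∉ ⋂ ξ ∈ Iio κ.ord, A {ξ} := by rw [hempty _ subset_rfl hinf]; exact notMem_empty x
  simp only [mem_iInter, not_forall] at hx
  obtain ⟨ξ, hξ, hxξ⟩ := hx
  exact ⟨A {ξ}, hAF {ξ} (by simpa using hξ), hxξ⟩

/-- The basis is `{A_u : u ∈ [κ]^{<ω}}`. -/
lemma PRSystem.exists_basis {lam κ : Cardinal.{0}} {F : Set (Set Ordinal.{0})}
    {Z : Set Ordinal.{0}} (hlam : ℵ₀ ≤ lam) (hκ : κ < lam) (h : PRSystem κ F Z) :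
    ∃ G : Set (Set Ordinal.{0}), G ⊆ 𝒫 Z ∧ #G ≤ lift.{1} lam ∧
      F = {B | B ⊆ Z ∧ ∃ g ∈ G, g ⊆ B} := by
  obtain ⟨A, hAF, -, -, hF⟩ := h
  refine ⟨A '' {u | ↑u ⊆ Iio κ.ord}, ?_, ?_, ?_⟩
  · rintro _ ⟨u, hu, rfl⟩
    have := hAF u hu
    rw [hF] at this
    exact this.1
  · refine mk_image_le.trans ((mk_setOf_finset_subset_le _).trans ?_)
    rw [mk_Iio_ord]
    exact max_le (lift_le.2 hκ.le) (by simpa using hlam)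
  · rw [hF]
    ext B
    simp only [mem_ofPred_eq, exists_mem_image]

def LocalFilter.ofBasis (x : Ordinal.{0} × Set Ordinal.{0} × Set (Set Ordinal.{0})) :
    LocalFilter :=
  ⟨x.1, x.2.1, {B | B ⊆ x.2.1 ∧ ∃ g ∈ x.2.2, g ⊆ B}⟩

lemma two_power_power_self {c : Cardinal.{u}} (hc : ℵ₀ ≤ c) : ((2 : Cardinal) ^ c) ^ c = 2 ^ c := by
  rw [← power_mul, mul_eq_self hc]

lemma mk_Fpr_le {lam : Cardinal.{0}} (hlam : ℵ₀ ≤ lam) :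
    #(Fpr lam) ≤ 2 ^ lift.{1} lam := by
  set I := Iio lam.ord
  have hsub : Fpr lam ⊆ LocalFilter.ofBasis '' (I ×ˢ 𝒫 I ×ˢ {G | G ⊆ 𝒫 I ∧ #G ≤ lift.{1} lam}) := by
    rintro ⟨a, Z, F⟩ ⟨-, hZ, -, hleast, -, κ, -, hκ, hpr⟩
    obtain ⟨G, hGZ, hG, hF⟩ := hpr.exists_basis hlam hκ
    refine ⟨(a, Z, G), ⟨hZ hleast.1, hZ, fun g hg => (hGZ hg).trans hZ, hG⟩, ?_⟩
    exact congrArg (LocalFilter.mk a Z) hF.symm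
  have hlam' : ℵ₀ ≤ lift.{1} lam := by simpa using hlam
  have hle : lift.{1} lam ≤ 2 ^ lift.{1} lam := (cantor _).le
  refine (mk_le_mk_of_subset hsub).trans (mk_image_le.trans ?_)
  rw [mk_congr ((Equiv.Set.prod _ _).trans (Equiv.prodCongr (Equiv.refl _) (Equiv.Set.prod _ _))),
    mk_prod, mk_prod, lift_id, lift_id, lift_id, lift_id, mk_powerset, mk_Iio_ord]
  have hG : #{G : Set (Set Ordinal.{0}) | G ⊆ 𝒫 I ∧ #G ≤ lift.{1} lam} ≤ 2 ^ lift.{1} lam := by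
    refine (mk_bounded_subset_le _ _).trans ?_
    rw [mk_powerset, mk_Iio_ord, max_eq_left (hlam'.trans hle), two_power_power_self hlam']
  calc lift.{1} lam *
        (2 ^ lift.{1} lam * #{G : Set (Set Ordinal.{0}) | G ⊆ 𝒫 I ∧ #G ≤ lift.{1} lam})
      ≤ 2 ^ lift.{1} lam * (2 ^ lift.{1} lam * 2 ^ lift.{1} lam) := by gcongr
    _ = 2 ^ lift.{1} lam := by rw [mul_eq_self (hlam'.trans hle), mul_eq_self (hlam'.trans hle)]

lemma mk_Qstar_le (lam : Cardinal.{0}) (S : Set LocalFilter) :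
    #(Qstar lam S) ≤ max #S ℵ₀ ^ lift.{1} lam :=
  (mk_le_mk_of_subset (t := {r | r ⊆ S ∧ #r ≤ lift.{1} lam}) fun _ hr => ⟨hr.1, hr.2.1.le⟩).trans
    (mk_bounded_subset_le S _)

lemma mk_Qstar_Fpr_le {lam : Cardinal.{0}} (hlam : ℵ₀ ≤ lam) :
    #(Qstar lam (Fpr lam)) ≤ 2 ^ lift.{1} lam := by
  have hlam' : ℵ₀ ≤ lift.{1} lam := by simpa using hlam
  refine (mk_Qstar_le lam _).trans ((power_le_power_right (max_le (mk_Fpr_le hlam)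
    (hlam'.trans (cantor _).le))).trans (two_power_power_self hlam').le)

section Regular

variable {lam : Cardinal.{0}}

lemma exists_subset_Iio_of_mk_lt (hreg : lam.IsRegular) {S : Set Ordinal.{0}}
    (hS : S ⊆ Iio lam.ord) (hc : #S < lift.{1} lam) : ∃ β < lam.ord, S ⊆ Iio β := by
  have hsup : sSup S < lam.ord :=
    Ordinal.sSup_lt_of_lt_cof (by rwa [← Ordinal.lift_cof, hreg.cof_ord]) hS
  refine ⟨sSup S + 1, (isSuccLimit_ord hreg.aleph0_le).add_one_lt hsup, fun x hx => ?_⟩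
  exact Order.lt_add_one_iff.2 (le_csSup ⟨lam.ord, fun y hy => (hS hy).le⟩ hx)

lemma exists_mem_le_of_mk_eq {C : Set Ordinal.{0}} (hC : #C = lift.{1} lam) {β : Ordinal.{0}}
    (hβ : β < lam.ord) : ∃ x ∈ C, β ≤ x := by
  by_contra! h
  have hsub : C ⊆ Iio β := fun x hx => h x hx
  refine ((mk_le_mk_of_subset hsub).trans_lt ?_).ne hC
  rw [mk_Iio_ordinal]
  exact lift_lt.2 (lt_ord.1 hβ)

lemma mk_Iic_lt (hlam : ℵ₀ ≤ lam) {γ : Ordinal.{0}} (hγ : γ < lam.ord) :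
    #(Iic γ) < lift.{1} lam := by
  rw [← Order.Iio_succ, mk_Iio_ordinal]
  exact lift_lt.2 (lt_ord.1 ((isSuccLimit_ord hlam).succ_lt hγ))

lemma exists_bound_of_fibers (hreg : lam.IsRegular) {p : Set LocalFilter}
    (hfib : ∀ ξ, #{t | t ∈ p ∧ t.a = ξ} < lift.{1} lam)
    (hZ : ∀ t ∈ p, t.Z ⊆ Iio lam.ord ∧ #t.Z < lift.{1} lam) :
    ∃ h : Ordinal.{0} → Ordinal.{0},
      ∀ γ < lam.ord, h γ < lam.ord ∧ ∀ t ∈ p, t.a ≤ γ → t.Z ⊆ Iio (h γ) := by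
  suffices ∀ γ < lam.ord, ∃ β < lam.ord, ∀ t ∈ p, t.a ≤ γ → t.Z ⊆ Iio β by
    choose! h hlt hh using this
    exact ⟨h, fun γ hγ => ⟨hlt γ hγ, hh γ hγ⟩⟩
  intro γ hγ
  have hlow : #{t | t ∈ p ∧ t.a ≤ γ} < lift.{1} lam := by
    have : {t | t ∈ p ∧ t.a ≤ γ} = ⋃ ξ ∈ Iic γ, {t | t ∈ p ∧ t.a = ξ} := by ext t; simp
    rw [this, card_biUnion_lt_iff_forall_of_isRegular hreg.lift (mk_Iic_lt hreg.aleph0_le hγ)]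
    exact fun ξ _ => hfib ξ
  have hU : #↥(⋃ t ∈ {t | t ∈ p ∧ t.a ≤ γ}, t.Z) < lift.{1} lam :=
    (card_biUnion_lt_iff_forall_of_isRegular hreg.lift hlow).2 fun t ht => (hZ t ht.1).2
  obtain ⟨β, hβ, hsub⟩ :=
    exists_subset_Iio_of_mk_lt hreg (iUnion₂_subset fun t ht => (hZ t ht.1).1) hU
  exact ⟨β, hβ, fun t ht hta => (subset_biUnion_of_mem (u := fun t : LocalFilter => t.Z)
    (show t ∈ {t | t ∈ p ∧ t.a ≤ γ} from ⟨ht, hta⟩)).trans hsub⟩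

/-- `z ι` is the least admissible element of `C ι`; there is one because, by regularity, the
fewer than `λ` earlier constraints are bounded below `λ`. -/
theorem exists_diagonal_seq (hreg : lam.IsRegular) (C : Ordinal.{0} → Set Ordinal.{0})
    (hC : ∀ ι < lam.ord, C ι ⊆ Iio lam.ord ∧ #(C ι) = lift.{1} lam)
    (h : Ordinal.{0} → Ordinal.{0}) (hh : ∀ γ < lam.ord, h γ < lam.ord) :
    ∃ z : Ordinal.{0} → Ordinal.{0},
      ∀ ι < lam.ord, z ι ∈ C ι ∧ ∀ j < ι, z j < z ι ∧ h (z j) < z ι := by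
  let z : Ordinal.{0} → Ordinal.{0} := wellFounded_lt.fix fun ι ih =>
    sInf {x | x ∈ C ι ∧ ∀ j (hj : j < ι), ih j hj < x ∧ h (ih j hj) < x}
  have hz : ∀ ι, z ι = sInf {x | x ∈ C ι ∧ ∀ j < ι, z j < x ∧ h (z j) < x} :=
    fun ι => wellFounded_lt.fix_eq _ ι
  refine ⟨z, fun ι => ?_⟩
  induction ι using WellFoundedLT.induction with
  | _ ι ih =>
    intro hι
    have hprev : (fun j => max (z j) (h (z j))) '' Iio ι ⊆ Iio lam.ord := by
      rintro _ ⟨j, hj, rfl⟩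
      have hzj := (hC j (hj.trans hι)).1 (ih j hj (hj.trans hι)).1
      exact max_lt hzj (hh _ hzj)
    obtain ⟨β, hβ, hbound⟩ := exists_subset_Iio_of_mk_lt hreg hprev
      (mk_image_le.trans_lt (by rw [mk_Iio_ordinal]; exact lift_lt.2 (lt_ord.1 hι)))
    obtain ⟨x, hxC, hβx⟩ := exists_mem_le_of_mk_eq (hC ι hι).2 hβ
    rw [hz]
    exact csInf_mem (s := {x | x ∈ C ι ∧ ∀ j < ι, z j < x ∧ h (z j) < x})
      ⟨x, hxC, fun j hj => max_lt_iff.1 ((hbound (mem_image_of_mem _ hj)).trans_le hβx)⟩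

end Regular

lemma IsFilterOn.exists_mem_disjoint {α : Type u} {F : Set (Set α)} {Z R : Set α}
    (hF : IsFilterOn F Z) (hfree : ∀ x, ∃ B ∈ F, x ∉ B) (hR : (R ∩ Z).Subsingleton) :
    ∃ B ∈ F, Disjoint B R := by
  rcases hR.eq_empty_or_singleton with hRZ | ⟨x, hx⟩
  · exact ⟨Z, hF.2.1, by rwa [disjoint_iff_inter_eq_empty, inter_comm]⟩
  · obtain ⟨B, hB, hxB⟩ := hfree x
    refine ⟨B, hB, disjoint_left.2 fun y hyB hyR => hxB ?_⟩
    have hy : y ∈ R ∩ Z := ⟨hyR, hF.1 B hB hyB⟩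
    rw [hx, mem_singleton_iff] at hy
    exact hy ▸ hyB

lemma Pararegular.exists_mem_notMem {lam : Cardinal.{0}} {F : Set (Set Ordinal.{0})}
    {Z : Set Ordinal.{0}} {α : Ordinal.{0}} (h : Pararegular lam F Z α) (x : Ordinal.{0}) :
    ∃ B ∈ F, x ∉ B := by
  obtain ⟨κ, hκ, -, hpr⟩ := h
  refine hpr.exists_mem_notMem (le_trans ?_ hκ) x
  simp

lemma exists_mem_fil_disjoint {lam : Cardinal.{0}} (hlam : 0 < lam) {p : Set LocalFilter}
    {R : Set Ordinal.{0}}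
    (hp : ∀ t ∈ p, t.Z ⊆ Iio lam.ord ∧ IsFilterOn t.F t.Z ∧ ∃ B ∈ t.F, Disjoint B R) :
    ∃ A ∈ fil lam p, Disjoint A R := by
  choose! B hBF hBR using fun t ht => (hp t ht).2.2
  refine ⟨⋃ t ∈ p, B t, ⟨iUnion₂_subset fun t ht => ((hp t ht).2.1.1 _ (hBF t ht)).trans
    (hp t ht).1, 0, ord_pos.2 hlam, fun t ht _ => ?_⟩, disjoint_iUnion₂_left.2 hBR⟩
  have hfilt := (hp t ht).2.1
  exact hfilt.2.2.1 _ (hBF t ht) _ (subset_inter (subset_biUnion_of_mem (u := B) ht)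
    (hfilt.1 _ (hBF t ht))) inter_subset_right

lemma exists_large_fibers {σ : Type 1} [Nonempty σ] {lam : Cardinal.{0}} (hlam : ℵ₀ ≤ lam)
    (hσ : #σ ≤ lift.{1} lam) :
    ∃ g : Ordinal.{0} → σ, ∀ b, lift.{1} lam ≤ #{ξ | ξ < lam.ord ∧ g ξ = b} := by
  classical
  set I := Iio lam.ord
  obtain ⟨e⟩ : Nonempty (I ≃ I × I) :=
    Cardinal.eq.1 (by rw [mk_prod, lift_id, mk_Iio_ord, mul_eq_self (by simpa using hlam)])
  obtain ⟨ι⟩ : Nonempty (σ ↪ I) := by rwa [← le_def, mk_Iio_ord]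
  let g : Ordinal.{0} → σ := fun ξ =>
    if hξ : ξ ∈ I then Function.invFun ι (e ⟨ξ, hξ⟩).1 else Classical.arbitrary σ
  refine ⟨g, fun b => ?_⟩
  rw [← mk_Iio_ord]
  refine mk_le_of_injective (f := fun η : I => (⟨(e.symm (ι b, η)).1, (e.symm (ι b, η)).2,
    by simp [g, Function.leftInverse_invFun ι.injective b]⟩ : {ξ | ξ < lam.ord ∧ g ξ = b}))
    fun η η' hη => ?_
  have hval : (e.symm (ι b, η) : Ordinal.{0}) = e.symm (ι b, η') :=
    congrArg (fun x : {ξ | ξ < lam.ord ∧ g ξ = b} => (x : Ordinal.{0})) hη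
  simpa using e.symm.injective (Subtype.ext hval)

theorem exists_mem_fil_forall_mk_diff {lam : Cardinal.{0}} (hreg : lam.IsRegular)
    {p : Set LocalFilter} (hpS : p ⊆ Fpr lam)
    (hfib : ∀ ξ, #{t | t ∈ p ∧ t.a = ξ} < lift.{1} lam) {𝔅 : Set (Set Ordinal.{0})}
    (hne : 𝔅.Nonempty) (h𝔅 : #𝔅 ≤ lift.{1} lam)
    (hB : ∀ B ∈ 𝔅, B ⊆ Iio lam.ord ∧ #B = lift.{1} lam) :
    ∃ A ∈ fil lam p, ∀ B ∈ 𝔅, #↥(B \ A) = lift.{1} lam := by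
  have := hne.to_subtype
  obtain ⟨g, hg⟩ := exists_large_fibers hreg.aleph0_le h𝔅
  obtain ⟨h, hh⟩ := exists_bound_of_fibers hreg hfib fun t ht => ⟨(hpS ht).2.1, (hpS ht).2.2.1⟩
  obtain ⟨z, hz⟩ := exists_diagonal_seq hreg (fun ι => (g ι).1) (fun ι _ => hB _ (g ι).2) h
    fun γ hγ => (hh γ hγ).1
  have hzlt : ∀ ι < lam.ord, z ι < lam.ord := fun ι hι => (hB _ (g ι).2).1 (hz ι hι).1
  -- `t.Z` lies below `h (min t.Z)`, which every later term of `z` exceeds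
  have hnext : ∀ t ∈ p, ∀ j ι, j < ι → ι < lam.ord → z j ∈ t.Z → z ι ∉ t.Z :=
    fun t ht j ι hjι hι hjZ hιZ => ((hz ι hι).2 j hjι).2.not_gt
      ((hh _ (hzlt j (hjι.trans hι))).2 t ht ((hpS ht).2.2.2.1.2 hjZ) hιZ)
  have honce : ∀ t ∈ p, (z '' Iio lam.ord ∩ t.Z).Subsingleton := by
    rintro t ht _ ⟨⟨j, hj, rfl⟩, hjZ⟩ _ ⟨⟨ι, hι, rfl⟩, hιZ⟩
    rcases lt_trichotomy j ι with hlt | rfl | hlt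
    · exact absurd hιZ (hnext t ht j ι hlt hι hjZ)
    · rfl
    · exact absurd hjZ (hnext t ht ι j hlt hj hιZ)
  obtain ⟨A, hA, hAz⟩ := exists_mem_fil_disjoint hreg.pos (R := z '' Iio lam.ord) fun t ht => by
    obtain ⟨-, hZ, -, -, hF, hpr⟩ := hpS ht
    exact ⟨hZ, hF, hF.exists_mem_disjoint hpr.exists_mem_notMem (honce t ht)⟩
  refine ⟨A, hA, fun B hB' => le_antisymm (mk_le_of_subset_Iio_ord
    (sdiff_subset.trans (hB B hB').1)) ?_⟩
  set fiber := {ξ | ξ < lam.ord ∧ g ξ = ⟨B, hB'⟩}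
  have hmono : StrictMonoOn z (Iio lam.ord) := fun a _ b hb hab => ((hz b hb).2 a hab).1
  have hinj : InjOn z fiber := hmono.injOn.mono fun _ hξ => hξ.1
  have hsub : z '' fiber ⊆ B \ A := by
    rintro _ ⟨ξ, ⟨hξ, hgξ⟩, rfl⟩
    have hzB := (hz ξ hξ).1
    rw [hgξ] at hzB
    exact ⟨hzB, fun hzA => disjoint_left.1 hAz hzA ⟨ξ, hξ, rfl⟩⟩
  calc lift.{1} lam ≤ #fiber := hg _
    _ = #(z '' fiber) := (mk_image_eq_of_injOn _ _ hinj).symm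
    _ ≤ #↥(B \ A) := mk_le_mk_of_subset hsub

lemma exists_mem_fil_finitelySatisfies_insert {lam : Cardinal.{0}} (hreg : lam.IsRegular)
    {P : Set (Set Ordinal.{0})} (hP : FinitelySatisfies (LargeInter lam) P)
    (hPc : #P ≤ lift.{1} lam) {p : Set LocalFilter} (hp : p ∈ Qstar lam (Fpr lam)) :
    ∃ A ∈ fil lam p, FinitelySatisfies (LargeInter lam) (insert (Iio lam.ord \ A) P) := by
  have hlam : ℵ₀ ≤ lift.{1} lam := by simpa using hreg.aleph0_le
  set 𝔅 := (fun s => Iio lam.ord ∩ ⋂₀ s) '' {s | s ⊆ P ∧ s.Finite}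
  have h𝔅 : #𝔅 ≤ lift.{1} lam := by
    have hrange : 𝔅 ⊆ range fun u : Finset P => Iio lam.ord ∩ ⋂₀ (Subtype.val '' (u : Set P)) := by
      rintro _ ⟨s, ⟨hsP, hsfin⟩, rfl⟩
      refine ⟨(hsfin.preimage Subtype.val_injective.injOn).toFinset, ?_⟩
      simp only [Finite.coe_toFinset, Subtype.image_preimage_coe]
      rw [inter_eq_right.2 hsP]
    refine (mk_le_mk_of_subset hrange).trans (mk_range_le.trans ?_)
    rcases finite_or_infinite P with hPf | hPf
    · exact mk_le_aleph0.trans hlam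
    · exact (mk_finset_of_infinite P).le.trans hPc
  obtain ⟨A, hA, hlarge⟩ := exists_mem_fil_forall_mk_diff hreg hp.1 hp.2.2 (𝔅 := 𝔅)
    ⟨_, mem_image_of_mem _ (⟨empty_subset P, finite_empty⟩ : ∅ ∈ {s | s ⊆ P ∧ s.Finite})⟩ h𝔅
    (by rintro _ ⟨s, ⟨hsP, hsfin⟩, rfl⟩; exact ⟨inter_subset_left, hP s hsP hsfin⟩)
  refine ⟨A, hA, finitelySatisfies_largeInter_insert_iff.2 fun s hsP hsfin => ?_⟩
  have hset : Iio lam.ord ∩ ⋂₀ s ∩ (Iio lam.ord \ A) = (Iio lam.ord ∩ ⋂₀ s) \ A := by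
    ext x
    simp only [mem_inter_iff, mem_sdiff]
    tauto
  rw [hset]
  exact hlarge _ ⟨s, ⟨hsP, hsfin⟩, rfl⟩

theorem exists_family_meeting_requirements {lam : Cardinal.{0}} (hreg : lam.IsRegular)
    (h2 : (2 : Cardinal.{0}) ^ lam = Order.succ lam) :
    ∃ P : Set (Set Ordinal.{0}), FinitelySatisfies (LargeInter lam) P ∧
      (∀ X ⊆ Iio lam.ord, X ∈ P ∨ Iio lam.ord \ X ∈ P) ∧
      ∀ p ∈ Qstar lam (Fpr lam), ∃ A ∈ fil lam p, Iio lam.ord \ A ∈ P := by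
  have hlam := hreg.aleph0_le
  have hlam' : ℵ₀ ≤ lift.{1} lam := by simpa using hlam
  have h2' : (2 : Cardinal.{1}) ^ lift.{1} lam = Order.succ (lift.{1} lam) := by
    rw [← lift_two_power, h2, lift_succ]
  let H : ↥(𝒫 Iio lam.ord) ⊕ ↥(Qstar lam (Fpr lam)) → Set (Set Ordinal.{0}) :=
    Sum.elim (fun X => {X.1, Iio lam.ord \ X.1}) fun p => (Iio lam.ord \ ·) '' fil lam p.1
  have hτ : #(↥(𝒫 Iio lam.ord) ⊕ ↥(Qstar lam (Fpr lam))) ≤ Order.succ (lift.{1} lam) := by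
    rw [mk_sum, lift_id, lift_id, mk_powerset, mk_Iio_ord, ← h2']
    exact (add_le_add le_rfl (mk_Qstar_Fpr_le hlam)).trans
      (add_eq_self (hlam'.trans (cantor _).le)).le
  obtain ⟨P, hP, hmeet⟩ := exists_finitelySatisfies_of_mk_le hτ (ok := LargeInter lam)
    (by simp [LargeInter]) H fun P T hP hPc => by
      rcases T with X | p
      · rcases finitelySatisfies_insert_or_compl hlam hP X.1 with h | h
        exacts [⟨X.1, Or.inl rfl, h⟩, ⟨_, Or.inr rfl, h⟩]
      · obtain ⟨A, hA, h⟩ :=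
          exists_mem_fil_finitelySatisfies_insert hreg hP (Order.lt_succ_iff.1 hPc) p.2
        exact ⟨_, mem_image_of_mem _ hA, h⟩
  refine ⟨P, hP, fun X hX => ?_, fun p hp => ?_⟩
  · obtain ⟨S, hS, hSP⟩ := hmeet (Sum.inl ⟨X, hX⟩)
    rcases hS with rfl | rfl
    exacts [Or.inl hSP, Or.inr hSP]
  · obtain ⟨_, ⟨A, hA, rfl⟩, hAP⟩ := hmeet (Sum.inr ⟨p, hp⟩)
    exact ⟨A, hA, hAP⟩

theorem stmt18_general (lam : Cardinal.{0}) (hreg : lam.IsRegular)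
    (h2 : (2 : Cardinal.{0}) ^ lam = Order.succ lam) :
    ∃ D : Set (Set Ordinal.{0}), IsUltraOn D (Set.Iio lam.ord) ∧
      IsUniform lam D ∧ ∀ p ∈ Qstar lam (Fpr lam), ¬ fil lam p ⊆ D := by
  obtain ⟨P, hP, hsplit, hkill⟩ := exists_family_meeting_requirements hreg h2
  have hD : IsFilterOn (filterGen (Iio lam.ord) P) (Iio lam.ord) :=
    isFilterOn_filterGen fun s hs hfin => by
      rw [← nonempty_coe_sort, ← mk_ne_zero_iff, hP s hs hfin]
      simpa using hreg.pos.ne'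
  refine ⟨filterGen (Iio lam.ord) P, ⟨hD, fun X hX => ?_⟩, ?_, fun p hp hsub => ?_⟩
  · rcases hsplit X hX with h | h
    exacts [Or.inl (mem_filterGen h hX), Or.inr (mem_filterGen h sdiff_subset)]
  · rintro A ⟨hA, s, hs, hfin, hsA⟩
    exact le_antisymm (mk_le_of_subset_Iio_ord hA) (hP s hs hfin ▸ mk_le_mk_of_subset hsA)
  · obtain ⟨A, hA, hcompl⟩ := hkill p hp
    refine hD.2.2.2.2 ?_
    rw [← inter_sdiff_self A (Iio lam.ord)]
    exact hD.2.2.2.1 _ (hsub hA) _ (mem_filterGen hcompl sdiff_subset)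

/-- Proposition 3.6: assuming `2^lam = lam⁺` there is a uniform ultrafilter on `lam`
containing no `fil(p)` for `p ∈ Q*(𝓕^pr)`. -/
theorem stmt18 (lam : Cardinal.{0}) (hreg : lam.IsRegular) (hunc : ℵ₀ < lam)
    (h2 : (2 : Cardinal.{0}) ^ lam = Order.succ lam) :
    ∃ D : Set (Set Ordinal.{0}), IsUltraOn D (Set.Iio lam.ord) ∧
      IsUniform lam D ∧ ∀ p ∈ Qstar lam (Fpr lam), ¬ fil lam p ⊆ D :=
  stmt18_general lam hreg h2

end

end RS889
end

section
/- Assume (a) there exists a λ-Kurepa tree with 2^λ many λ-branches, (b) D is a uniform filter on λ, (c) p ∈ Q⁰_λ(𝓕^pr) is such that fil(p) ⊆ D, and (d) if λ is a limit cardinal, then λ is strongly inaccessible and p ∈ Q⁰_λ(𝓕^spr). Then D cannot be generated by fewer than 2^λ sets: for every family 𝓧 ⊆ D of cardinality less than 2^λ there is a set A ∈ D such that |X ∖ A| = λ for all X ∈ 𝓧. -/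
namespace RS889

noncomputable section

open Cardinal Set

universe u v

/-!
Index the sets to be constructed by the `2 ^ λ` branches `η` of the Kurepa tree. Each
`(α, Z, F) ∈ p` carries a pararegular system `⟨A_u : u ∈ [κ]^{<ω}⟩`; pick a level `l ≤ α` of the
tree with at most `κ` restrictions of branches, in such a way that `l → λ` as `α → λ`. If
`λ = μ⁺`, every level has at most `μ ≤ |ω + α| ≤ κ` nodes once `α ≥ μ`; otherwise the highest
level with at most `|ω + α|` restrictions has at most `|ω + α| ^ |α| = 2 ^ |ω + α| ≤ κ` of them.
Coding `η ↾ l` by an ordinal `c(η) < κ`, the union `A_η` of the sets `A_{c(η)}` over `p`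
belongs to `fil(p) ⊆ D`.

For `B ∈ D` and `ε < λ` only finitely many `η` have `B \ A_η ⊆ ε`: infinitely many of them
would have pairwise distinct restrictions to some level below `λ` (as `cf λ > ℵ₀`), hence
pairwise distinct codes at every late `(α, Z, F) ∈ p`, while a point of `B ∩ Z` above `ε` lies
in all their sets `A_{c(η)}`, contradicting pararegularity. So at most `λ` branches `η` have
`|B \ A_η| < λ`, and as `|𝓧| · λ < 2 ^ λ`, some `A_η` works for every `B ∈ 𝓧`.
-/

open scoped Ordinal

@[simp]
lemma truncF_of_lt {γ ξ : Ordinal.{0}} (h : ξ < γ) (f : Ordinal.{0} → Ordinal.{0}) :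
    truncF γ f ξ = f ξ := if_pos h

@[simp]
lemma truncF_of_not_lt {γ ξ : Ordinal.{0}} (h : ¬ξ < γ) (f : Ordinal.{0} → Ordinal.{0}) :
    truncF γ f ξ = 0 := if_neg h

lemma truncF_truncF_of_le {γ γ' : Ordinal.{0}} (h : γ ≤ γ') (f : Ordinal.{0} → Ordinal.{0}) :
    truncF γ (truncF γ' f) = truncF γ f := by
  funext ξ
  by_cases hξ : ξ < γ
  · simp [hξ, hξ.trans_le h]
  · simp [hξ]

lemma image_truncF_image_truncF_of_le {γ γ' : Ordinal.{0}} (h : γ ≤ γ')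
    (W : Set (Ordinal.{0} → Ordinal.{0})) :
    truncF γ '' (truncF γ' '' W) = truncF γ '' W := by
  rw [image_image]
  exact image_congr fun f _ => truncF_truncF_of_le h f

lemma mk_image_truncF_mono (W : Set (Ordinal.{0} → Ordinal.{0})) {γ γ' : Ordinal.{0}}
    (h : γ ≤ γ') : #(truncF γ '' W) ≤ #(truncF γ' '' W) := by
  rw [← image_truncF_image_truncF_of_le h]
  exact mk_image_le

lemma infinite_image_truncF_mono {W : Set (Ordinal.{0} → Ordinal.{0})} {γ γ' : Ordinal.{0}}
    (h : γ ≤ γ') (hW : (truncF γ '' W).Infinite) : (truncF γ' '' W).Infinite := by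
  rw [← image_truncF_image_truncF_of_le h] at hW
  exact hW.of_image _

lemma mk_image_truncF_le_prod (W : Set (Ordinal.{0} → Ordinal.{0})) (δ : Ordinal.{0}) :
    #(truncF δ '' W) ≤ prod fun β : Iio δ => #(truncF (β + 1) '' W) := by
  rw [← mk_pi]
  have hmaps : ∀ f ∈ truncF δ '' W, ∀ β : Iio δ,
      truncF (β + 1) f ∈ truncF (β + 1) '' W := by
    rintro _ ⟨η, hη, rfl⟩ ⟨β, hβ⟩
    exact ⟨η, hη, (truncF_truncF_of_le (Order.add_one_le_of_lt hβ) η).symm⟩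
  refine mk_le_of_injective (f := fun f β => ⟨truncF (β + 1) f, hmaps f f.2 β⟩) ?_
  intro f g heq
  ext ξ
  by_cases hξ : ξ < δ
  · have := congrFun (congrArg Subtype.val (congrFun heq ⟨ξ, hξ⟩)) ξ
    simpa [hξ, Order.lt_add_one_iff] using this
  · obtain ⟨η, -, hη⟩ := f.2
    obtain ⟨ν, -, hν⟩ := g.2
    simp [← hη, ← hν, hξ]

/-- Any two members of a sequence in `W` differ somewhere below `o`; as `cof o > ℵ₀`, the
countably many places witnessing this are bounded below `o`. -/
lemma exists_infinite_image_truncF {o : Ordinal.{0}} (ho : ℵ₀ < o.cof)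
    {W : Set (Ordinal.{0} → Ordinal.{0})} (hW : W.Infinite) (hWo : ∀ f ∈ W, truncF o f = f) :
    ∃ γ < o, (truncF γ '' W).Infinite := by
  let g : ℕ ↪ (Ordinal.{0} → Ordinal.{0}) :=
    (hW.natEmbedding _).trans (Function.Embedding.subtype _)
  have hgW : ∀ n, g n ∈ W := fun n => (hW.natEmbedding _ n).2
  have hsep : ∀ q : ℕ × ℕ, ∃ ξ < o, q.1 ≠ q.2 → g q.1 ξ ≠ g q.2 ξ := by
    rintro ⟨i, j⟩
    by_cases hij : i = j
    · exact ⟨0, pos_iff_ne_zero.2 (by rintro rfl; simp at ho), fun h => (h hij).elim⟩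
    by_contra! hall
    refine g.injective.ne hij (funext fun ξ => ?_)
    by_cases hξ : ξ < o
    · exact (hall ξ hξ).2
    · rw [← hWo _ (hgW i), ← hWo _ (hgW j), truncF_of_not_lt hξ, truncF_of_not_lt hξ]
  choose d hdo hd using hsep
  refine ⟨⨆ q, d q + 1, Ordinal.iSup_add_one_lt_of_lt_cof (by simpa using ho) hdo, ?_⟩
  refine Infinite.mono (image_mono (range_subset_iff.2 hgW)) ?_
  rw [← range_comp]
  refine infinite_range_of_injective fun i j hij => ?_
  by_contra hne
  have hlt : d (i, j) < ⨆ q, d q + 1 :=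
    (Order.lt_add_one_iff.2 le_rfl).trans_le (Ordinal.le_iSup (fun q => d q + 1) (i, j))
  have := congrFun hij (d (i, j))
  simp only [Function.comp_apply, truncF_of_lt hlt] at this
  exact hd (i, j) hne this

def goodLevel (W : Set (Ordinal.{0} → Ordinal.{0})) (α : Ordinal.{0}) : Ordinal.{0} :=
  sSup {γ | γ ≤ α ∧ #(truncF γ '' W) ≤ lift (ω + α).card}

lemma goodLevel_le (W : Set (Ordinal.{0} → Ordinal.{0})) (α : Ordinal.{0}) :
    goodLevel W α ≤ α :=
  csSup_le' fun _ hγ => hγ.1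

lemma le_goodLevel {W : Set (Ordinal.{0} → Ordinal.{0})} {α γ : Ordinal.{0}} (hγ : γ ≤ α)
    (hW : #(truncF γ '' W) ≤ lift (ω + α).card) : γ ≤ goodLevel W α :=
  le_csSup ⟨α, fun _ h => h.1⟩ ⟨hγ, hW⟩

/-- Below `goodLevel W α` every successor level has at most `|ω + α|` restrictions, so the
restrictions to `goodLevel W α` number at most `|ω + α| ^ |α| = 2 ^ |ω + α|`. -/
lemma mk_image_truncF_goodLevel_le (W : Set (Ordinal.{0} → Ordinal.{0})) (α : Ordinal.{0}) :
    #(truncF (goodLevel W α) '' W) ≤ lift (2 ^ (ω + α).card) := by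
  set c := (ω + α).card
  have hc : ℵ₀ ≤ c := Ordinal.aleph0_le_card.2 le_self_add
  have hsucc : ∀ β : Iio (goodLevel W α), #(truncF (β + 1) '' W) ≤ lift c := by
    rintro ⟨β, hβ⟩
    obtain ⟨γ, ⟨-, hγ⟩, hβγ⟩ := exists_lt_of_lt_csSup' (mem_Iio.1 hβ)
    exact (mk_image_truncF_mono W (Order.add_one_le_of_lt hβγ)).trans hγ
  calc #(truncF (goodLevel W α) '' W)
      ≤ prod fun β : Iio (goodLevel W α) => #(truncF (β + 1) '' W) :=
        mk_image_truncF_le_prod W _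
    _ ≤ lift c ^ #(Iio (goodLevel W α)) := (prod_le_prod _ _ hsucc).trans_eq (prod_const' _ _)
    _ = lift (c ^ (goodLevel W α).card) := by rw [mk_Iio_ordinal, lift_power]
    _ ≤ lift (c ^ c) := by
        refine lift_le.2 (power_le_power_left (aleph0_pos.trans_le hc).ne' ?_)
        exact Ordinal.card_le_card ((goodLevel_le W α).trans le_add_self)
    _ = lift (2 ^ c) := by rw [power_self_eq hc]

lemma exists_forall_le_goodLevel {lam : Cardinal.{0}} {W : Set (Ordinal.{0} → Ordinal.{0})}
    (hW : ∀ γ < lam.ord, #(truncF γ '' W) < lift lam) {β : Ordinal.{0}} (hβ : β < lam.ord) :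
    ∃ ε < lam.ord, ∀ α, ε ≤ α → β ≤ goodLevel W α := by
  obtain ⟨ρ, hρ, hρW⟩ := lt_lift_iff.1 (hW β hβ)
  refine ⟨max β ρ.ord, max_lt hβ (ord_lt_ord.2 hρ), fun α hα => ?_⟩
  refine le_goodLevel (le_of_max_le_left hα) ?_
  rw [← hρW, lift_le]
  calc ρ = ρ.ord.card := (card_ord ρ).symm
    _ ≤ (ω + α).card := Ordinal.card_le_card ((le_of_max_le_right hα).trans le_add_self)

lemma mk_image_truncF_branches_lt {lam : Cardinal.{0}} {T : Set TNode}
    (hT : IsKurepaTree lam T) {γ : Ordinal.{0}} (hγ : γ < lam.ord) :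
    #(truncF γ '' branches lam T) < lift lam := by
  refine lt_of_le_of_lt ?_ (hT.2 γ hγ).2
  refine mk_le_of_injective (f := fun f => ⟨(γ, f), ?_, rfl⟩) fun f g h => ?_
  · obtain ⟨η, hη, hf⟩ := f.2
    rw [← hf]
    exact hη.2 γ hγ
  · exact Subtype.ext (congrArg (fun x : TNode => x.2) (congrArg Subtype.val h))

lemma PRSystem.exists_separating {κ : Cardinal.{0}} {F : Set (Set Ordinal.{0})}
    {Z : Set Ordinal.{0}} (hF : PRSystem κ F Z) {ι : Type u} {β : Type 1} (f : ι → β)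
    (hf : #(range f) ≤ lift κ) :
    ∃ a : ι → Set Ordinal.{0}, (∀ i, a i ∈ F) ∧
      ∀ W : Set ι, (f '' W).Infinite → ⋂ i ∈ W, a i = ∅ := by
  obtain ⟨A, hAF, -, hAU, -⟩ := hF
  rw [← card_ord κ, ← mk_Iio_ordinal] at hf
  obtain ⟨e⟩ := hf
  let c : ι → Ordinal.{0} := fun i => e (rangeFactorization f i)
  refine ⟨fun i => A {c i}, fun i => hAF _ (by simp [c]), fun W hW => ?_⟩
  have hcW : (c '' W).Infinite := by
    rw [← coe_comp_rangeFactorization f, image_comp] at hW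
    rw [show c = (Subtype.val ∘ e) ∘ rangeFactorization f from rfl, image_comp]
    exact (hW.of_image _).image (Subtype.val_injective.comp e.injective).injOn
  rw [← biInter_image (f := c) (g := fun ξ => A {ξ})]
  exact hAU _ (image_subset_iff.2 fun i _ => (e _).2) hcW

def IsLocalFamily (lam : Cardinal.{0}) (p : Set LocalFilter) : Prop :=
  ∀ t ∈ p, t.Z ⊆ Iio lam.ord ∧ IsLeast t.Z t.a ∧ IsFilterOn t.F t.Z

lemma isLocalFamily_of_subset_Fpr {lam : Cardinal.{0}} {p : Set LocalFilter}
    (hp : p ⊆ Fpr lam) : IsLocalFamily lam p :=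
  fun _ ht => ⟨(hp ht).2.1, (hp ht).2.2.2.1, (hp ht).2.2.2.2.1⟩

namespace IsLocalFamily

variable {lam : Cardinal.{0}} {p : Set LocalFilter}

lemma eq_of_mem_Z (hp : IsLocalFamily lam p) (hsd : StronglyDisjoint p) {s t : LocalFilter}
    (hs : s ∈ p) (ht : t ∈ p) {x : Ordinal.{0}} (hxs : x ∈ s.Z) (hxt : x ∈ t.Z) :
    s = t := by
  rcases lt_trichotomy s.a t.a with h | h | h
  · exact ((hsd.2 s hs t ht h hxs).not_ge ((hp t ht).2.1.2 hxt)).elim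
  · exact hsd.1 s hs t ht h
  · exact ((hsd.2 t ht s hs h hxt).not_ge ((hp s hs).2.1.2 hxs)).elim

lemma biUnion_inter_Z (hp : IsLocalFamily lam p) (hsd : StronglyDisjoint p)
    {a : LocalFilter → Set Ordinal.{0}} (ha : ∀ t ∈ p, a t ⊆ t.Z) {t : LocalFilter}
    (ht : t ∈ p) : (⋃ s ∈ p, a s) ∩ t.Z = a t := by
  refine Subset.antisymm ?_ fun x hx => ⟨mem_biUnion ht hx, ha t ht hx⟩
  rintro x ⟨hx, hxt⟩
  obtain ⟨s, hs, hxs⟩ := mem_iUnion₂.1 hx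
  rwa [← hp.eq_of_mem_Z hsd hs ht (ha s hs hxs) hxt]

lemma biUnion_mem_fil (hp : IsLocalFamily lam p) (hsd : StronglyDisjoint p) (hlam : 0 < lam)
    {a : LocalFilter → Set Ordinal.{0}} (ha : ∀ t ∈ p, a t ∈ t.F) :
    (⋃ t ∈ p, a t) ∈ fil lam p := by
  have haZ : ∀ t ∈ p, a t ⊆ t.Z := fun t ht => (hp t ht).2.2.1 _ (ha t ht)
  refine ⟨iUnion₂_subset fun t ht => (haZ t ht).trans (hp t ht).1, 0, ord_pos.2 hlam,
    fun t ht _ => ?_⟩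
  rw [hp.biUnion_inter_Z hsd haZ ht]
  exact ha t ht

lemma exists_inter_Z_nonempty (hp : IsLocalFamily lam p) {D : Set (Set Ordinal.{0})}
    (hD : IsFilterOn D (Iio lam.ord)) (hpD : fil lam p ⊆ D) {B : Set Ordinal.{0}} (hB : B ∈ D)
    {ε : Ordinal.{0}} (hε : ε < lam.ord) : ∃ t ∈ p, ε ≤ t.a ∧ (B ∩ t.Z).Nonempty := by
  let tail : Set Ordinal.{0} := {x | ∃ t ∈ p, ε ≤ t.a ∧ x ∈ t.Z}
  have htail : tail ∈ fil lam p := by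
    refine ⟨?_, ε, hε, fun t ht hta => ?_⟩
    · rintro _ ⟨t, ht, -, hx⟩
      exact (hp t ht).1 hx
    rw [inter_eq_self_of_subset_right (show t.Z ⊆ tail from fun x hx => ⟨t, ht, hta, hx⟩)]
    exact (hp t ht).2.2.2.1
  obtain ⟨x, hxB, t, ht, hta, hxt⟩ := nonempty_iff_ne_empty.2 fun h =>
    hD.2.2.2.2 (h ▸ hD.2.2.2.1 B hB tail (hpD htail))
  exact ⟨t, ht, hta, x, hxB, hxt⟩

/-- A point of `B ∩ t.Z` above `ε` lies in `a t i` for every `i` of the set, so `hsep` forbids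
the set to be infinite. -/
lemma finite_setOf_diff_subset_Iio (hp : IsLocalFamily lam p) (hsd : StronglyDisjoint p)
    {D : Set (Set Ordinal.{0})} (hD : IsFilterOn D (Iio lam.ord)) (hpD : fil lam p ⊆ D)
    {ι : Type*} {a : LocalFilter → ι → Set Ordinal.{0}} (ha : ∀ t ∈ p, ∀ i, a t i ∈ t.F)
    (hsep : ∀ W : Set ι, W.Infinite →
      ∃ ε < lam.ord, ∀ t ∈ p, ε ≤ t.a → ⋂ i ∈ W, a t i = ∅)
    {B : Set Ordinal.{0}} (hB : B ∈ D) {ε : Ordinal.{0}} (hε : ε < lam.ord) :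
    {i | B \ ⋃ t ∈ p, a t i ⊆ Iio ε}.Finite := by
  by_contra hW
  obtain ⟨ε', hε', hempty⟩ := hsep _ hW
  obtain ⟨t, ht, hta, x, hxB, hxt⟩ := hp.exists_inter_Z_nonempty hD hpD hB (max_lt hε hε')
  have hx : x ∈ ⋂ i ∈ {i | B \ ⋃ t ∈ p, a t i ⊆ Iio ε}, a t i := by
    refine mem_iInter₂.2 fun i hi => ?_
    have hxa : x ∈ ⋃ s ∈ p, a s i := by
      by_contra hxa
      exact (hi ⟨hxB, hxa⟩).not_ge ((le_of_max_le_left hta).trans ((hp t ht).2.1.2 hxt))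
    rw [← hp.biUnion_inter_Z hsd (fun s hs => (hp s hs).2.2.1 _ (ha s hs i)) ht]
    exact ⟨hxa, hxt⟩
  rwa [hempty t ht (le_of_max_le_right hta)] at hx

end IsLocalFamily

lemma mk_setOf_mk_diff_lt_le {lam : Cardinal.{0}} (hreg : lam.IsRegular) {B : Set Ordinal.{0}}
    (hB : B ⊆ Iio lam.ord) {ι : Type 1} (A : ι → Set Ordinal.{0})
    (hfin : ∀ ε < lam.ord, {i | B \ A i ⊆ Iio ε}.Finite) :
    #{i | #(B \ A i : Set Ordinal.{0}) < lift lam} ≤ lift lam := by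
  have hcover : {i | #(B \ A i : Set Ordinal.{0}) < lift lam} ⊆
      ⋃ ε : Iio lam.ord, {i | B \ A i ⊆ Iio ε} := by
    intro i hi
    have hcof : #(B \ A i : Set Ordinal.{0}) < (Ordinal.lift.{1} lam.ord).cof := by
      rwa [← Ordinal.lift_cof, hreg.cof_ord]
    have hbdd : BddAbove ((· + 1) '' (B \ A i)) := by
      refine ⟨lam.ord, ?_⟩
      rintro _ ⟨x, hx, rfl⟩
      exact Order.add_one_le_of_lt (hB hx.1)
    refine mem_iUnion.2 ⟨⟨_, Ordinal.sSup_add_one_lt_of_lt_cof hcof fun x hx => hB hx.1⟩,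
      fun x hx => ?_⟩
    exact (Order.lt_add_one_iff.2 le_rfl).trans_le (le_csSup hbdd (mem_image_of_mem _ hx))
  calc _ ≤ #(⋃ ε : Iio lam.ord, {i | B \ A i ⊆ Iio ε}) := mk_le_mk_of_subset hcover
    _ ≤ #(Iio lam.ord) * ⨆ ε : Iio lam.ord, #{i | B \ A i ⊆ Iio ε} := mk_iUnion_le _
    _ ≤ lift lam * ℵ₀ := by
        refine mul_le_mul' (by rw [mk_Iio_ordinal, card_ord]) (ciSup_le' fun ε => ?_)
        exact (hfin ε ε.2).lt_aleph0.le
    _ = lift lam := mul_aleph0_eq (aleph0_le_lift.2 hreg.aleph0_le)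

lemma exists_mem_forall_mk_diff_eq {lam : Cardinal.{0}} (hreg : lam.IsRegular)
    {D : Set (Set Ordinal.{0})} (hD : IsFilterOn D (Iio lam.ord)) {ι : Type 1}
    (A : ι → Set Ordinal.{0}) (hAD : ∀ i, A i ∈ D)
    (hfin : ∀ B ∈ D, ∀ ε < lam.ord, {i | B \ A i ⊆ Iio ε}.Finite)
    {X : Set (Set Ordinal.{0})} (hXD : X ⊆ D) (hX : #X < #ι) (hι : lift lam < #ι) :
    ∃ A' ∈ D, ∀ B ∈ X, #(B \ A' : Set Ordinal.{0}) = lift lam := by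
  have hbad : #(⋃ B ∈ X, {i | #(B \ A i : Set Ordinal.{0}) < lift lam}) < #ι :=
    calc _ ≤ #X * ⨆ B : X, #{i | #(B.1 \ A i : Set Ordinal.{0}) < lift lam} :=
          mk_biUnion_le (fun B => {i | #(B \ A i : Set Ordinal.{0}) < lift lam}) X
      _ ≤ #X * lift lam := by
          refine mul_le_mul' le_rfl (ciSup_le' fun B => ?_)
          exact mk_setOf_mk_diff_lt_le hreg (hD.1 _ (hXD B.2)) A (hfin _ (hXD B.2))
      _ < #ι := mul_lt_of_lt ((aleph0_le_lift.2 hreg.aleph0_le).trans hι.le) hX hι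
  obtain ⟨i, hi⟩ : ∃ i, i ∉ ⋃ B ∈ X, {i | #(B \ A i : Set Ordinal.{0}) < lift lam} := by
    by_contra! h
    exact hbad.not_ge (by rw [eq_univ_of_forall h, mk_univ])
  refine ⟨A i, hAD i, fun B hB => le_antisymm ?_ (not_lt.1 fun h => hi (mem_biUnion hB h))⟩
  calc #(B \ A i : Set Ordinal.{0}) ≤ #(Iio lam.ord) :=
        mk_le_mk_of_subset (sdiff_subset.trans (hD.1 B (hXD hB)))
    _ = lift lam := by rw [mk_Iio_ordinal, card_ord]

lemma exists_forall_prSystem_mk_image_truncF_goodLevel_le {lam : Cardinal.{0}} (hlam : 0 < lam)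
    {W : Set (Ordinal.{0} → Ordinal.{0})} (hW : ∀ γ < lam.ord, #(truncF γ '' W) < lift lam)
    {p : Set LocalFilter} (hp : p ⊆ Fpr lam)
    (hspr : (∀ μ : Cardinal.{0}, lam ≠ Order.succ μ) → p ⊆ Fspr lam) :
    ∃ ε < lam.ord, ∀ t ∈ p, ε ≤ t.a →
      ∃ κ, PRSystem κ t.F t.Z ∧ #(truncF (goodLevel W t.a) '' W) ≤ lift κ := by
  by_cases hlim : ∀ μ : Cardinal.{0}, lam ≠ Order.succ μ
  · refine ⟨0, ord_pos.2 hlam, fun t ht _ => ?_⟩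
    obtain ⟨κ, hκ, -, hPR⟩ := (hspr hlim ht).2.2.2.2.2
    exact ⟨κ, hPR, (mk_image_truncF_goodLevel_le W t.a).trans (lift_le.2 hκ)⟩
  · push Not at hlim
    obtain ⟨μ, rfl⟩ := hlim
    refine ⟨μ.ord, ord_lt_ord.2 (Order.lt_succ μ), fun t ht hta => ?_⟩
    obtain ⟨κ, hκ, -, hPR⟩ := (hp ht).2.2.2.2.2
    have hlt := hW _ ((goodLevel_le W t.a).trans_lt ((hp ht).2.1 (hp ht).2.2.2.1.1))
    rw [lift_succ, Order.lt_succ_iff] at hlt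
    refine ⟨κ, hPR, hlt.trans (lift_le.2 ?_)⟩
    calc μ = μ.ord.card := (card_ord μ).symm
      _ ≤ (ω + t.a).card := Ordinal.card_le_card (hta.trans le_add_self)
      _ ≤ κ := hκ

lemma exists_separating_of_isKurepaTree {lam : Cardinal.{0}} (hreg : lam.IsRegular)
    (hunc : ℵ₀ < lam) {T : Set TNode} (hT : IsKurepaTree lam T) {p : Set LocalFilter}
    (hp : p ⊆ Fpr lam)
    (hspr : (∀ μ : Cardinal.{0}, lam ≠ Order.succ μ) → p ⊆ Fspr lam) :
    ∃ a : LocalFilter → branches lam T → Set Ordinal.{0},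
      (∀ t ∈ p, ∀ η, a t η ∈ t.F) ∧ ∀ W : Set (branches lam T), W.Infinite →
        ∃ ε < lam.ord, ∀ t ∈ p, ε ≤ t.a → ⋂ η ∈ W, a t η = ∅ := by
  set BB := branches lam T
  have hBB : ∀ γ < lam.ord, #(truncF γ '' BB) < lift lam :=
    fun γ hγ => mk_image_truncF_branches_lt hT hγ
  obtain ⟨ε, hε, hPR⟩ :=
    exists_forall_prSystem_mk_image_truncF_goodLevel_le hreg.pos hBB hp hspr
  have hlocal : ∀ t, ∃ a : BB → Set Ordinal.{0}, (t ∈ p → ∀ η, a η ∈ t.F) ∧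
      (t ∈ p → ε ≤ t.a → ∀ W : Set BB,
        (truncF (goodLevel BB t.a) '' (Subtype.val '' W)).Infinite → ⋂ η ∈ W, a η = ∅) := by
    intro t
    by_cases ht : t ∈ p ∧ ε ≤ t.a
    · obtain ⟨κ, hPRt, hκ⟩ := hPR t ht.1 ht.2
      obtain ⟨a, ha, hsep⟩ := hPRt.exists_separating (truncF (goodLevel BB t.a) ∘ Subtype.val)
        (by rwa [range_comp, Subtype.range_coe])
      exact ⟨a, fun _ => ha, fun _ _ W hW => hsep W (by rwa [image_comp])⟩
    · exact ⟨fun _ => t.Z, fun ht' _ => (hp ht').2.2.2.2.1.2.1,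
        fun ht' hta => (ht ⟨ht', hta⟩).elim⟩
  choose a ha hsep using hlocal
  refine ⟨a, ha, fun W hW => ?_⟩
  obtain ⟨γ, hγ, hγW⟩ := exists_infinite_image_truncF (o := lam.ord) (by rwa [hreg.cof_ord])
    (hW.image Subtype.val_injective.injOn) (by rintro _ ⟨η, -, rfl⟩; exact η.2.1.symm)
  obtain ⟨ε', hε', hle⟩ := exists_forall_le_goodLevel hBB hγ
  exact ⟨max ε ε', max_lt hε hε', fun t ht hta => hsep t ht (le_of_max_le_left hta) W
    (infinite_image_truncF_mono (hle _ (le_of_max_le_right hta)) hγW)⟩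

theorem stmt19_general (lam : Cardinal.{0}) (hreg : lam.IsRegular) (hunc : ℵ₀ < lam)
    (hKurepa : ∃ T : Set TNode, IsKurepaTree lam T ∧
      #(branches lam T) = Cardinal.lift.{1} ((2 : Cardinal.{0}) ^ lam))
    (D : Set (Set Ordinal.{0}))
    (hD : IsFilterOn D (Set.Iio lam.ord))
    (p : Set LocalFilter) (hp : p ∈ Qzero lam (Fpr lam)) (hpD : fil lam p ⊆ D)
    (hlim : (∀ μ : Cardinal.{0}, lam ≠ Order.succ μ) →
      lam.IsInaccessible ∧ p ∈ Qzero lam (Fspr lam)) :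
    ∀ X ⊆ D, #X < Cardinal.lift.{1} ((2 : Cardinal.{0}) ^ lam) →
      ∃ A ∈ D, ∀ B ∈ X, #(↥(B \ A)) = Cardinal.lift.{1} lam := by
  intro X hXD hX
  obtain ⟨T, hT, hTcard⟩ := hKurepa
  obtain ⟨⟨hpFpr, -, -⟩, hsd⟩ := hp
  have hpl := isLocalFamily_of_subset_Fpr hpFpr
  obtain ⟨a, ha, hsep⟩ :=
    exists_separating_of_isKurepaTree hreg hunc hT hpFpr fun h => (hlim h).2.1.1
  refine exists_mem_forall_mk_diff_eq hreg hD (fun η => ⋃ t ∈ p, a t η)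
    (fun η => hpD (hpl.biUnion_mem_fil hsd hreg.pos fun t ht => ha t ht η))
    (fun B hB ε hε => hpl.finite_setOf_diff_subset_Iio hsd hD hpD ha hsep hB hε) hXD ?_ ?_
  · rwa [hTcard]
  · rw [hTcard]
    exact lift_lt.2 (cantor lam)

/-- Proposition 3.7. -/
theorem stmt19 (lam : Cardinal.{0}) (hreg : lam.IsRegular) (hunc : ℵ₀ < lam)
    (hKurepa : ∃ T : Set TNode, IsKurepaTree lam T ∧
      #(branches lam T) = Cardinal.lift.{1} ((2 : Cardinal.{0}) ^ lam))
    (D : Set (Set Ordinal.{0}))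
    (hD : IsFilterOn D (Set.Iio lam.ord)) (hDu : IsUniform lam D)
    (p : Set LocalFilter) (hp : p ∈ Qzero lam (Fpr lam)) (hpD : fil lam p ⊆ D)
    (hlim : (∀ μ : Cardinal.{0}, lam ≠ Order.succ μ) →
      lam.IsInaccessible ∧ p ∈ Qzero lam (Fspr lam)) :
    ∀ X ⊆ D, #X < Cardinal.lift.{1} ((2 : Cardinal.{0}) ^ lam) →
      ∃ A ∈ D, ∀ B ∈ X, #(↥(B \ A)) = Cardinal.lift.{1} lam :=
  stmt19_general lam hreg hunc hKurepa D hD p hp hpD hlim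

end

end RS889
end
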